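/- arXiv:2106.12983 — 4 statements merged into one kernel-verified Lean document; each statement's English description precedes it below -/
import Mathlib

section
/- Let d ≥ 1, v ∈ ℝ^d with v ≠ 0, and w ∈ ℝ^d. Write w^⊥ := w - (⟨v,w⟩/‖v‖²)·v. Then the second Fréchet derivative of the function x ↦ (d-1)·‖x‖^{-1} at v evaluated at (w, w) equals -((d-1)/‖v‖³)·(‖w^⊥‖² - 2‖w - w^⊥‖²), which also equals ((d-1)/‖v‖³)·(3⟨v,w⟩²/‖v‖² - ‖w‖²). -/
open RealInnerProductSpace

section Aux

variable {E : Type*} [NormedAddCommGroup E] [InnerProductSpace ℝ E]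

private lemma rpow_half_aux (y : E) : (⟪y, y⟫ : ℝ) ^ (-(1/2) : ℝ) = ‖y‖⁻¹ := by
  rw [real_inner_self_eq_norm_sq, ← Real.rpow_natCast ‖y‖ 2,
    ← Real.rpow_mul (norm_nonneg y)]
  norm_num [Real.rpow_neg_one]

private lemma rpow_3half_aux (y : E) : (⟪y, y⟫ : ℝ) ^ (-(3/2) : ℝ) = (‖y‖ ^ 3)⁻¹ := by
  rw [real_inner_self_eq_norm_sq, ← Real.rpow_natCast ‖y‖ 2,
    ← Real.rpow_mul (norm_nonneg y)]
  norm_num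

private lemma rpow_5half_aux (y : E) : (⟪y, y⟫ : ℝ) ^ (-(5/2) : ℝ) = (‖y‖ ^ 5)⁻¹ := by
  rw [real_inner_self_eq_norm_sq, ← Real.rpow_natCast ‖y‖ 2,
    ← Real.rpow_mul (norm_nonneg y)]
  norm_num

private lemma inner_sq_hasFDerivAt_aux (x : E) :
    HasFDerivAt (fun y : E => (⟪y, y⟫ : ℝ))
      ((fderivInnerCLM ℝ (x, x)).comp ((ContinuousLinearMap.id ℝ E).prod
        (ContinuousLinearMap.id ℝ E))) x :=
  (hasFDerivAt_id x).inner ℝ (hasFDerivAt_id x)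

private lemma rpow_inner_hasFDerivAt_aux (p : ℝ) (x : E) (hx : x ≠ 0) :
    HasFDerivAt (fun y : E => (⟪y, y⟫ : ℝ) ^ p)
      ((p * (⟪x, x⟫ : ℝ) ^ (p - 1)) •
        ((fderivInnerCLM ℝ (x, x)).comp ((ContinuousLinearMap.id ℝ E).prod
          (ContinuousLinearMap.id ℝ E)))) x := by
  have hn : ‖x‖ ≠ 0 := norm_ne_zero_iff.2 hx
  have hgx : (0:ℝ) < ⟪x, x⟫ := by rw [real_inner_self_eq_norm_sq]; positivity
  exact (Real.hasDerivAt_rpow_const (p := p) (Or.inl hgx.ne')).comp_hasFDerivAt_of_eq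
    x (inner_sq_hasFDerivAt_aux x) rfl

private lemma inv_norm_hasFDerivAt_aux (c : ℝ) (x : E) (hx : x ≠ 0) :
    HasFDerivAt (fun y : E => c * ‖y‖⁻¹) ((-c / ‖x‖ ^ 3) • innerSL ℝ x) x := by
  have h2 := (rpow_inner_hasFDerivAt_aux (-(1/2)) x hx).const_mul c
  have hfun : (fun y : E => c * ‖y‖⁻¹) = fun y : E => c * (⟪y, y⟫ : ℝ) ^ (-(1/2) : ℝ) := by
    funext y; rw [rpow_half_aux]
  rw [hfun]
  refine h2.congr_fderiv ?_
  ext u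
  have h3 : (⟪x, x⟫ : ℝ) ^ (-2⁻¹ - 1 : ℝ) = (‖x‖ ^ 3)⁻¹ := by
    rw [show (-2⁻¹ - 1 : ℝ) = -(3/2) by norm_num, rpow_3half_aux]
  simp [real_inner_comm x u, -inner_self_eq_norm_sq_to_K]
  rw [h3]
  ring

private lemma hessian_aux (c : ℝ) (v w : E) (hv : v ≠ 0) :
    fderiv ℝ (fderiv ℝ (fun y : E => c * ‖y‖⁻¹)) v w w
      = (c / ‖v‖ ^ 3) * (3 * ⟪v, w⟫ ^ 2 / ‖v‖ ^ 2 - ‖w‖ ^ 2) := by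
  have hn : ‖v‖ ≠ 0 := norm_ne_zero_iff.2 hv
  have hEq : fderiv ℝ (fun y : E => c * ‖y‖⁻¹)
      =ᶠ[nhds v] fun x : E => (-c * (⟪x, x⟫ : ℝ) ^ (-(3/2) : ℝ)) • innerSL ℝ x := by
    filter_upwards [IsOpen.mem_nhds isOpen_compl_singleton hv] with x hx
    rw [(inv_norm_hasFDerivAt_aux c x hx).fderiv, rpow_3half_aux x, neg_div,
      div_eq_mul_inv, neg_mul]
  rw [hEq.fderiv_eq]
  have hh := (rpow_inner_hasFDerivAt_aux (-(3/2)) v hv).const_mul (-c)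
  have hL : HasFDerivAt (fun x : E => innerSL ℝ x) (innerSL ℝ (E := E)) v :=
    (innerSL ℝ (E := E)).hasFDerivAt
  have hF := hh.smul hL
  rw [(show HasFDerivAt (fun x : E => (-c * (⟪x, x⟫ : ℝ) ^ (-(3/2) : ℝ)) • innerSL ℝ x) _ v from hF).fderiv]
  have h5 : (⟪v, v⟫ : ℝ) ^ (-(3/2) - 1 : ℝ) = (‖v‖ ^ 5)⁻¹ := by
    rw [show (-(3/2) - 1 : ℝ) = -(5/2) by norm_num, rpow_5half_aux]
  simp [h5, rpow_3half_aux, real_inner_comm v w, -inner_self_eq_norm_sq_to_K]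
  field_simp
  rw [show (innerSL ℝ w) w = ⟪w, w⟫ from rfl, real_inner_self_eq_norm_sq]
  ring

private lemma perp_identity_aux (v w : E) (hv : v ≠ 0) :
    -(‖w - (⟪v, w⟫ / ‖v‖ ^ 2) • v‖ ^ 2
        - 2 * ‖w - (w - (⟪v, w⟫ / ‖v‖ ^ 2) • v)‖ ^ 2)
      = 3 * ⟪v, w⟫ ^ 2 / ‖v‖ ^ 2 - ‖w‖ ^ 2 := by
  have hn : ‖v‖ ≠ 0 := norm_ne_zero_iff.2 hv
  rw [sub_sub_cancel]
  rw [norm_sub_sq_real, norm_smul, real_inner_smul_right, real_inner_comm w v]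
  simp only [Real.norm_eq_abs, mul_pow, sq_abs]
  field_simp
  ring

end Aux

/-- **Hessian of `x ↦ (d-1)·‖x‖⁻¹`, the Laplacian of the Morawetz weight**
(content of eq. 3.20 of the paper): for `v ≠ 0` in `ℝ^d`, `w ∈ ℝ^d` and
`w^⊥ = w - (⟨v,w⟩/‖v‖²)·v`,
`D²((d-1)‖·‖⁻¹)(v)(w,w) = -((d-1)/‖v‖³)·(‖w^⊥‖² - 2‖w - w^⊥‖²)
  = ((d-1)/‖v‖³)·(3⟨v,w⟩²/‖v‖² - ‖w‖²)`. -/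
theorem hessian_inv_norm (d : ℕ) (hd : 1 ≤ d)
    (v w : EuclideanSpace ℝ (Fin d)) (hv : v ≠ 0) :
    iteratedFDeriv ℝ 2
        (fun x : EuclideanSpace ℝ (Fin d) => (d - 1) * ‖x‖⁻¹) v ![w, w]
      = -((d - 1) / ‖v‖ ^ 3)
          * (‖w - (⟪v, w⟫ / ‖v‖ ^ 2) • v‖ ^ 2
              - 2 * ‖w - (w - (⟪v, w⟫ / ‖v‖ ^ 2) • v)‖ ^ 2) ∧
    iteratedFDeriv ℝ 2
        (fun x : EuclideanSpace ℝ (Fin d) => (d - 1) * ‖x‖⁻¹) v ![w, w]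
      = ((d - 1) / ‖v‖ ^ 3) * (3 * ⟪v, w⟫ ^ 2 / ‖v‖ ^ 2 - ‖w‖ ^ 2) := by
  have key : iteratedFDeriv ℝ 2
        (fun x : EuclideanSpace ℝ (Fin d) => (d - 1) * ‖x‖⁻¹) v ![w, w]
      = ((d - 1) / ‖v‖ ^ 3) * (3 * ⟪v, w⟫ ^ 2 / ‖v‖ ^ 2 - ‖w‖ ^ 2) := by
    rw [iteratedFDeriv_two_apply]
    simpa using hessian_aux ((d : ℝ) - 1) v w hv
  refine ⟨?_, key⟩
  rw [key, ← perp_identity_aux v w hv]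
  ring
end

section
/- Let d ≥ 1 and let α be a real number with 0 < α < d. For every real-valued Schwartz function g : ℝ^d → ℝ, the double integral ∬_{ℝ^d×ℝ^d} g(x)·g(y)·‖x-y‖^{-α} dx dy converges absolutely and is nonnegative. -/
open MeasureTheory Real Set

noncomputable section RieszAux

variable {d : ℕ}

local notation "E" => EuclideanSpace ℝ (Fin d)

private lemma riesz_parallelo (x y w : E) :
    ‖x - w‖ ^ 2 + ‖y - w‖ ^ 2
      = 2 * ‖w - (2⁻¹ : ℝ) • (x + y)‖ ^ 2 + ‖x - y‖ ^ 2 / 2 := by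
  have hp := parallelogram_law_with_norm ℝ (x - w) (y - w)
  have h1 : x - w + (y - w) = (2 : ℝ) • ((2⁻¹ : ℝ) • (x + y) - w) := by module
  have h2 : x - w - (y - w) = x - y := by abel
  rw [h1, h2] at hp
  have h3 : ‖(2 : ℝ) • ((2⁻¹ : ℝ) • (x + y) - w)‖ = 2 * ‖(2⁻¹ : ℝ) • (x + y) - w‖ := by
    rw [norm_smul]; simp
  rw [h3] at hp
  rw [norm_sub_rev w]
  nlinarith [hp]

private lemma riesz_gauss_integrable {b : ℝ} (hb : 0 < b) :
    Integrable (fun v : E => rexp (-(b * ‖v‖ ^ 2))) := by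
  have h := (GaussianFourier.integrable_cexp_neg_mul_sq_norm_add (b := (b : ℂ))
    (by simpa using hb) 0 (0 : E)).norm
  refine h.congr (Filter.Eventually.of_forall fun v => ?_)
  simp [Complex.norm_exp, neg_mul]
  left; norm_cast

private lemma riesz_gauss_shift_integral {b : ℝ} (hb : 0 < b) (m : E) :
    ∫ w : E, rexp (-(b * ‖w - m‖ ^ 2)) = (π / b) ^ ((d : ℝ) / 2) := by
  rw [MeasureTheory.integral_sub_right_eq_self (μ := (volume : Measure E))
    (fun u : E => rexp (-(b * ‖u‖ ^ 2))) m]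
  have := GaussianFourier.integral_rexp_neg_mul_sq_norm (V := E) hb
  simp only [neg_mul] at this
  rw [this, finrank_euclideanSpace_fin]

private lemma riesz_gauss_shift_integrable {b : ℝ} (hb : 0 < b) (m : E) :
    Integrable (fun w : E => rexp (-(b * ‖w - m‖ ^ 2))) :=
  (riesz_gauss_integrable hb).comp_sub_right m

/-- Positivity of the Gaussian bilinear form, via writing the Gaussian kernel as a
self-convolution of Gaussians. -/
private lemma riesz_bilinear_gauss_nonneg (g : SchwartzMap E ℝ) {t : ℝ} (ht : 0 < t) :
    0 ≤ ∫ p : E × E, g p.1 * g p.2 * rexp (-(‖p.1 - p.2‖ ^ 2 * t)) := by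
  have h4t : (0:ℝ) < 4 * t := by linarith
  have h2t : (0:ℝ) < 2 * t := by linarith
  set c : ℝ := (π / (4 * t)) ^ ((d : ℝ) / 2) with hc_def
  have hc : 0 < c := rpow_pos_of_pos (div_pos pi_pos h4t) _
  set Ψ : (E × E) × E → ℝ := fun q =>
    (g q.1.1 * rexp (-(2 * t * ‖q.1.1 - q.2‖ ^ 2))) *
    (g q.1.2 * rexp (-(2 * t * ‖q.1.2 - q.2‖ ^ 2))) with hΨ_def
  have key : ∀ (x y w : E),
      rexp (-(2 * t * ‖x - w‖ ^ 2)) * rexp (-(2 * t * ‖y - w‖ ^ 2))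
        = rexp (-(4 * t * ‖w - (2⁻¹ : ℝ) • (x + y)‖ ^ 2)) * rexp (-(‖x - y‖ ^ 2 * t)) := by
    intro x y w
    rw [← Real.exp_add, ← Real.exp_add]
    congr 1
    nlinarith [riesz_parallelo x y w]
  have hΨm : AEStronglyMeasurable Ψ ((volume.prod volume).prod (volume : Measure E)) := by
    apply Continuous.aestronglyMeasurable
    fun_prop
  have hsec : ∀ p : E × E, ∫ w : E, Ψ (p, w)
      = g p.1 * g p.2 * rexp (-(‖p.1 - p.2‖ ^ 2 * t)) * c := by
    rintro ⟨x, y⟩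
    have : ∀ w : E, Ψ ((x, y), w)
        = (g x * g y * rexp (-(‖x - y‖ ^ 2 * t))) *
          rexp (-(4 * t * ‖w - (2⁻¹ : ℝ) • (x + y)‖ ^ 2)) := by
      intro w
      simp only [hΨ_def]
      rw [mul_mul_mul_comm, key x y w]; ring
    simp_rw [this]
    rw [integral_const_mul, riesz_gauss_shift_integral h4t]
  have hsec_int : ∀ p : E × E, Integrable (fun w : E => Ψ (p, w)) := by
    rintro ⟨x, y⟩
    refine (((riesz_gauss_shift_integrable h4t ((2⁻¹ : ℝ) • (x + y))).const_mul
      (g x * g y * rexp (-(‖x - y‖ ^ 2 * t))))).congr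
      (Filter.Eventually.of_forall fun w => ?_)
    simp only [hΨ_def]
    rw [mul_mul_mul_comm, key x y w]; ring
  have hΨi : Integrable Ψ ((volume.prod volume).prod (volume : Measure E)) := by
    rw [MeasureTheory.integrable_prod_iff hΨm]
    refine ⟨Filter.Eventually.of_forall fun p => hsec_int p, ?_⟩
    have habs : Integrable (fun p : E × E => c * (|g p.1| * |g p.2|))
        (volume.prod volume) :=
      (g.integrable.abs.mul_prod g.integrable.abs).const_mul c
    refine habs.mono' ?_ (Filter.Eventually.of_forall fun p => ?_)
    · exact hΨm.norm.integral_prod_right'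
    · have h1 : ∫ w : E, ‖Ψ (p, w)‖ = |g p.1 * g p.2 * rexp (-(‖p.1 - p.2‖ ^ 2 * t))| * c := by
        have h2 : ∀ w : E, ‖Ψ (p, w)‖
            = |g p.1 * g p.2 * rexp (-(‖p.1 - p.2‖ ^ 2 * t))| *
              rexp (-(4 * t * ‖w - (2⁻¹ : ℝ) • (p.1 + p.2)‖ ^ 2)) := by
          intro w
          rw [Real.norm_eq_abs]
          have : Ψ (p, w) = (g p.1 * g p.2 * rexp (-(‖p.1 - p.2‖ ^ 2 * t))) *
              rexp (-(4 * t * ‖w - (2⁻¹ : ℝ) • (p.1 + p.2)‖ ^ 2)) := by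
            simp only [hΨ_def]
            rw [mul_mul_mul_comm, key p.1 p.2 w]; ring
          rw [this, abs_mul, abs_of_pos (Real.exp_pos _)]
        simp_rw [h2]
        rw [integral_const_mul, riesz_gauss_shift_integral h4t]
      rw [h1, Real.norm_eq_abs, abs_of_nonneg (by positivity)]
      have he : rexp (-(‖p.1 - p.2‖ ^ 2 * t)) ≤ 1 :=
        Real.exp_le_one_iff.mpr (neg_nonpos.mpr (by positivity))
      have hee : |g p.1 * g p.2 * rexp (-(‖p.1 - p.2‖ ^ 2 * t))| ≤ |g p.1| * |g p.2| := by
        rw [abs_mul, abs_mul, abs_of_pos (Real.exp_pos _)]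
        nlinarith [mul_nonneg (abs_nonneg (g p.1)) (abs_nonneg (g p.2)),
          Real.exp_pos (-(‖p.1 - p.2‖ ^ 2 * t))]
      calc |g p.1 * g p.2 * rexp (-(‖p.1 - p.2‖ ^ 2 * t))| * c
          ≤ (|g p.1| * |g p.2|) * c := mul_le_mul_of_nonneg_right hee hc.le
        _ = c * (|g p.1| * |g p.2|) := by ring
  have hswap : ∫ p : E × E, g p.1 * g p.2 * rexp (-(‖p.1 - p.2‖ ^ 2 * t))
      = c⁻¹ * ∫ w : E, (∫ x : E, g x * rexp (-(2 * t * ‖x - w‖ ^ 2))) ^ 2 := by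
    have h1 : ∫ p : E × E, g p.1 * g p.2 * rexp (-(‖p.1 - p.2‖ ^ 2 * t))
        = c⁻¹ * ∫ p : E × E, (∫ w : E, Ψ (p, w)) := by
      rw [← integral_const_mul]
      refine integral_congr_ae (Filter.Eventually.of_forall fun p => ?_)
      simp only []
      rw [hsec p]
      field_simp
    rw [h1]
    congr 1
    rw [MeasureTheory.Measure.volume_eq_prod]
    have h2 := MeasureTheory.integral_prod _ hΨi
    have h3 := MeasureTheory.integral_prod_symm _ hΨi
    rw [← h2, h3]
    refine integral_congr_ae (Filter.Eventually.of_forall fun w => ?_)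
    have h4 := MeasureTheory.integral_prod_mul (μ := (volume : Measure E))
      (ν := (volume : Measure E))
      (fun x : E => g x * rexp (-(2 * t * ‖x - w‖ ^ 2)))
      (fun x : E => g x * rexp (-(2 * t * ‖x - w‖ ^ 2)))
    simp only []
    rw [h4, sq]
  rw [hswap]
  have : 0 ≤ ∫ w : E, (∫ x : E, g x * rexp (-(2 * t * ‖x - w‖ ^ 2))) ^ 2 :=
    integral_nonneg fun w => sq_nonneg _
  positivity

end RieszAux

set_option maxHeartbeats 1000000 in
/-- **Positive-definiteness of the Riesz kernel `‖x‖^{-α}`** (eq. 3.22 of the paper,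
proved there via the Fourier transform and Plancherel's identity). For `0 < α < d`
and a real-valued Schwartz function `g` on `ℝ^d`, the double integral
`∬ g(x)·g(y)·‖x-y‖^{-α} dx dy` converges absolutely and is nonnegative. -/
theorem riesz_kernel_positive (d : ℕ) (hd : 1 ≤ d) (α : ℝ)
    (hα0 : 0 < α) (hαd : α < d)
    (g : SchwartzMap (EuclideanSpace ℝ (Fin d)) ℝ) :
    Integrable (fun p : EuclideanSpace ℝ (Fin d) × EuclideanSpace ℝ (Fin d) =>
        g p.1 * g p.2 * ‖p.1 - p.2‖ ^ (-α)) ∧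
    0 ≤ ∫ p : EuclideanSpace ℝ (Fin d) × EuclideanSpace ℝ (Fin d),
        g p.1 * g p.2 * ‖p.1 - p.2‖ ^ (-α) := by
  classical
  haveI : Nontrivial (EuclideanSpace ℝ (Fin d)) := by
    refine ⟨0, EuclideanSpace.single ⟨0, hd⟩ 1, ?_⟩
    intro h
    have := congrArg (fun v => v ⟨0, hd⟩) h
    simp [EuclideanSpace.single_apply] at this
  set E := EuclideanSpace ℝ (Fin d)
  set s : ℝ := α / 2 with hs_def
  have hs : 0 < s := by positivity
  have hsd : s - 1 - (d : ℝ) / 2 < -1 := by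
    have : (α : ℝ) < d := hαd
    simp only [hs_def]
    linarith
  have hs1 : (-1 : ℝ) < s - 1 := by linarith
  set ν : Measure ℝ := volume.restrict (Ioi (0 : ℝ)) with hν_def
  set μ2 : Measure (E × E) := volume with hμ2_def
  -- the big function on (E × E) × ℝ
  set Φ : (E × E) × ℝ → ℝ := fun q =>
    g q.1.1 * g q.1.2 * (q.2 ^ (s - 1) * rexp (-(‖q.1.1 - q.1.2‖ ^ 2 * q.2))) with hΦ_def
  -- boundedness of g
  obtain ⟨C, hC⟩ := g.decay 0 0
  have hC' : ∀ x : E, |g x| ≤ C := by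
    intro x
    have := hC.2 x
    simpa [norm_iteratedFDeriv_zero] using this
  have hC0 : 0 ≤ C := le_trans (abs_nonneg _) (hC' 0)
  -- integral bounds
  set M : ℝ := ∫ x : E, |g x| with hM_def
  have hM0 : 0 ≤ M := integral_nonneg fun x => abs_nonneg _
  have hgabs : Integrable (fun x : E => |g x|) := g.integrable.abs
  have habs : Integrable (fun p : E × E => |g p.1| * |g p.2|) μ2 := by
    rw [hμ2_def, MeasureTheory.Measure.volume_eq_prod]
    exact hgabs.mul_prod hgabs
  have hMM : ∫ p : E × E, |g p.1| * |g p.2| ∂μ2 = M * M := by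
    rw [hμ2_def, MeasureTheory.Measure.volume_eq_prod]
    exact MeasureTheory.integral_prod_mul (fun x : E => |g x|) (fun x : E => |g x|)
  -- measurability of Φ
  have mΦ : StronglyMeasurable Φ := by
    apply Measurable.stronglyMeasurable
    have hg : Continuous g := g.continuous
    fun_prop
  -- integrability of the Gaussian bilinear integrand, for each t > 0
  have hGe_int : ∀ t : ℝ, 0 < t → Integrable
      (fun p : E × E => |g p.1| * |g p.2| * rexp (-(‖p.1 - p.2‖ ^ 2 * t))) μ2 := by
    intro t ht
    refine habs.mono' ?_ (Filter.Eventually.of_forall fun p => ?_)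
    · apply Continuous.aestronglyMeasurable
      have hg : Continuous g := g.continuous
      fun_prop
    · have he : rexp (-(‖p.1 - p.2‖ ^ 2 * t)) ≤ 1 :=
        Real.exp_le_one_iff.mpr (neg_nonpos.mpr (by positivity))
      rw [Real.norm_eq_abs, abs_of_nonneg (by positivity)]
      nlinarith [mul_nonneg (mul_nonneg (abs_nonneg (g p.1)) (abs_nonneg (g p.2)))
        (sub_nonneg.mpr he)]
  have hsec_int : ∀ t : ℝ, 0 < t → Integrable (fun p : E × E => Φ (p, t)) μ2 := by
    intro t ht
    have hts : 0 ≤ t ^ (s - 1) := Real.rpow_nonneg ht.le _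
    refine (habs.const_mul (t ^ (s - 1))).mono'
      ?_ (Filter.Eventually.of_forall fun p => ?_)
    · apply Continuous.aestronglyMeasurable
      simp only [hΦ_def]
      exact ((g.continuous.comp continuous_fst).mul (g.continuous.comp continuous_snd)).mul
        (continuous_const.mul (Real.continuous_exp.comp (by fun_prop)))
    · simp only [hΦ_def]
      have he : rexp (-(‖p.1 - p.2‖ ^ 2 * t)) ≤ 1 :=
        Real.exp_le_one_iff.mpr (neg_nonpos.mpr (by positivity))
      rw [Real.norm_eq_abs]
      rw [abs_mul, abs_mul, abs_mul, abs_of_nonneg hts, abs_of_pos (Real.exp_pos _)]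
      nlinarith [mul_nonneg (mul_nonneg hts
        (mul_nonneg (abs_nonneg (g p.1)) (abs_nonneg (g p.2)))) (sub_nonneg.mpr he)]
  -- value of the inner Gaussian integral in y
  have hgauss_y : ∀ t : ℝ, 0 < t → ∀ x : E,
      ∫ y : E, rexp (-(‖x - y‖ ^ 2 * t)) = (π / t) ^ ((d : ℝ) / 2) := by
    intro t ht x
    have : ∀ y : E, rexp (-(‖x - y‖ ^ 2 * t)) = rexp (-(t * ‖y - x‖ ^ 2)) := by
      intro y; rw [norm_sub_rev, mul_comm]
    simp_rw [this]
    exact riesz_gauss_shift_integral ht x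
  have hgauss_y_int : ∀ t : ℝ, 0 < t → ∀ x : E,
      Integrable (fun y : E => rexp (-(‖x - y‖ ^ 2 * t))) := by
    intro t ht x
    refine (riesz_gauss_shift_integrable ht x).congr
      (Filter.Eventually.of_forall fun y => ?_)
    show rexp (-(t * ‖y - x‖ ^ 2)) = rexp (-(‖x - y‖ ^ 2 * t))
    rw [norm_sub_rev y x, mul_comm]
  -- two bounds on the Gaussian bilinear integral
  have hB1 : ∀ t : ℝ, 0 < t →
      ∫ p : E × E, |g p.1| * |g p.2| * rexp (-(‖p.1 - p.2‖ ^ 2 * t)) ∂μ2 ≤ M * M := by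
    intro t ht
    rw [← hMM]
    refine integral_mono (hGe_int t ht) habs fun p => ?_
    have he : rexp (-(‖p.1 - p.2‖ ^ 2 * t)) ≤ 1 :=
      Real.exp_le_one_iff.mpr (neg_nonpos.mpr (by positivity))
    nlinarith [mul_nonneg (mul_nonneg (abs_nonneg (g p.1)) (abs_nonneg (g p.2)))
      (sub_nonneg.mpr he)]
  have hB2 : ∀ t : ℝ, 0 < t →
      ∫ p : E × E, |g p.1| * |g p.2| * rexp (-(‖p.1 - p.2‖ ^ 2 * t)) ∂μ2
        ≤ C * (π / t) ^ ((d : ℝ) / 2) * M := by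
    intro t ht
    have hπt : 0 < (π / t) ^ ((d : ℝ) / 2) := rpow_pos_of_pos (div_pos pi_pos ht) _
    have hGe_int' : Integrable
        (fun p : E × E => |g p.1| * |g p.2| * rexp (-(‖p.1 - p.2‖ ^ 2 * t)))
        ((volume : Measure E).prod volume) := by
      have := hGe_int t ht
      rwa [hμ2_def, MeasureTheory.Measure.volume_eq_prod] at this
    have hinner_int : ∀ x : E,
        Integrable (fun y : E => |g x| * |g y| * rexp (-(‖x - y‖ ^ 2 * t))) := by
      intro x
      refine (((hgauss_y_int t ht x).const_mul (|g x| * C))).mono'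
        ?_ (Filter.Eventually.of_forall fun y => ?_)
      · apply Continuous.aestronglyMeasurable
        have hg : Continuous g := g.continuous
        fun_prop
      · rw [Real.norm_eq_abs, abs_of_nonneg (by positivity)]
        nlinarith [mul_nonneg (mul_nonneg (sub_nonneg.mpr (hC' y)) (abs_nonneg (g x)))
          (Real.exp_pos (-(‖x - y‖ ^ 2 * t))).le]
    have hinner_le : ∀ x : E,
        ∫ y : E, |g x| * |g y| * rexp (-(‖x - y‖ ^ 2 * t))
          ≤ |g x| * (C * (π / t) ^ ((d : ℝ) / 2)) := by
      intro x
      have step : ∫ y : E, |g x| * |g y| * rexp (-(‖x - y‖ ^ 2 * t))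
          ≤ ∫ y : E, |g x| * C * rexp (-(‖x - y‖ ^ 2 * t)) := by
        refine integral_mono (hinner_int x)
          (((hgauss_y_int t ht x).const_mul (|g x| * C))) fun y => ?_
        nlinarith [mul_nonneg (mul_nonneg (sub_nonneg.mpr (hC' y)) (abs_nonneg (g x)))
          (Real.exp_pos (-(‖x - y‖ ^ 2 * t))).le]
      calc ∫ y : E, |g x| * |g y| * rexp (-(‖x - y‖ ^ 2 * t))
          ≤ ∫ y : E, |g x| * C * rexp (-(‖x - y‖ ^ 2 * t)) := step
        _ = |g x| * C * ((π / t) ^ ((d : ℝ) / 2)) := by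
            rw [integral_const_mul, hgauss_y t ht x]
        _ = |g x| * (C * (π / t) ^ ((d : ℝ) / 2)) := by ring
    rw [hμ2_def, MeasureTheory.Measure.volume_eq_prod,
      MeasureTheory.integral_prod _ hGe_int']
    have houter : ∫ x : E, (∫ y : E, |g x| * |g y| * rexp (-(‖x - y‖ ^ 2 * t)))
        ≤ ∫ x : E, |g x| * (C * (π / t) ^ ((d : ℝ) / 2)) := by
      refine integral_mono hGe_int'.integral_prod_left
        (hgabs.mul_const _) fun x => hinner_le x
    calc ∫ x : E, (∫ y : E, |g x| * |g y| * rexp (-(‖x - y‖ ^ 2 * t)))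
        ≤ ∫ x : E, |g x| * (C * (π / t) ^ ((d : ℝ) / 2)) := houter
      _ = M * (C * (π / t) ^ ((d : ℝ) / 2)) := by rw [integral_mul_const, hM_def]
      _ = C * (π / t) ^ ((d : ℝ) / 2) * M := by ring
  -- the norm-integral over p, as a function of t
  have hval : ∀ t : ℝ, 0 < t → ∫ p : E × E, ‖Φ (p, t)‖ ∂μ2
      = t ^ (s - 1) *
        ∫ p : E × E, |g p.1| * |g p.2| * rexp (-(‖p.1 - p.2‖ ^ 2 * t)) ∂μ2 := by
    intro t ht
    have hts : 0 ≤ t ^ (s - 1) := Real.rpow_nonneg ht.le _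
    rw [← integral_const_mul]
    refine integral_congr_ae (Filter.Eventually.of_forall fun p => ?_)
    simp only [hΦ_def, Real.norm_eq_abs]
    rw [abs_mul, abs_mul, abs_mul, abs_of_nonneg hts, abs_of_pos (Real.exp_pos _)]
    ring
  have hWm : AEStronglyMeasurable (fun t : ℝ => ∫ p : E × E, ‖Φ (p, t)‖ ∂μ2) ν := by
    exact (mΦ.norm.integral_prod_left' (μ := μ2)).aestronglyMeasurable
  -- integrability of the norm-integral in t
  have hW : Integrable (fun t : ℝ => ∫ p : E × E, ‖Φ (p, t)‖ ∂μ2) ν := by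
    rw [hν_def]
    have hsplit : Ioi (0 : ℝ) = Ioc (0 : ℝ) 1 ∪ Ioi (1 : ℝ) :=
      (Set.Ioc_union_Ioi_eq_Ioi zero_le_one).symm
    rw [hsplit]
    have hWm1 : AEStronglyMeasurable (fun t : ℝ => ∫ p : E × E, ‖Φ (p, t)‖ ∂μ2)
        (volume.restrict (Ioc (0:ℝ) 1)) := by
      exact (mΦ.norm.integral_prod_left' (μ := μ2)).aestronglyMeasurable
    have hWm2 : AEStronglyMeasurable (fun t : ℝ => ∫ p : E × E, ‖Φ (p, t)‖ ∂μ2)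
        (volume.restrict (Ioi (1:ℝ))) := by
      exact (mΦ.norm.integral_prod_left' (μ := μ2)).aestronglyMeasurable
    refine MeasureTheory.IntegrableOn.union ?_ ?_
    · -- on (0, 1]
      have hmaj : IntegrableOn (fun t : ℝ => M * M * t ^ (s - 1)) (Ioc (0:ℝ) 1) := by
        have h := (intervalIntegral.intervalIntegrable_rpow' (a := 0) (b := 1) hs1)
        rw [intervalIntegrable_iff_integrableOn_Ioc_of_le zero_le_one] at h
        exact h.const_mul _
      refine hmaj.integrable.mono' hWm1 ?_
      filter_upwards [ae_restrict_mem measurableSet_Ioc] with t htmem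
      have ht : 0 < t := htmem.1
      have hts : 0 ≤ t ^ (s - 1) := Real.rpow_nonneg ht.le _
      rw [Real.norm_eq_abs, abs_of_nonneg (by
        rw [hval t ht]
        have := (hGe_int t ht)
        have h0 : 0 ≤ ∫ p : E × E, |g p.1| * |g p.2| * rexp (-(‖p.1 - p.2‖ ^ 2 * t)) ∂μ2 :=
          integral_nonneg fun p => by positivity
        positivity)]
      rw [hval t ht]
      calc t ^ (s - 1) * ∫ p : E × E, |g p.1| * |g p.2| * rexp (-(‖p.1 - p.2‖ ^ 2 * t)) ∂μ2
          ≤ t ^ (s - 1) * (M * M) := by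
            have := hB1 t ht
            exact mul_le_mul_of_nonneg_left this hts
        _ = M * M * t ^ (s - 1) := by ring
    · -- on (1, ∞)
      have hmaj : IntegrableOn
          (fun t : ℝ => C * π ^ ((d : ℝ) / 2) * M * t ^ (s - 1 - (d : ℝ) / 2))
          (Ioi (1:ℝ)) :=
        (integrableOn_Ioi_rpow_of_lt hsd one_pos).const_mul _
      refine hmaj.integrable.mono' hWm2 ?_
      filter_upwards [ae_restrict_mem measurableSet_Ioi] with t htmem
      have ht1 : 1 < t := htmem
      have ht : 0 < t := lt_trans one_pos ht1
      have hts : 0 ≤ t ^ (s - 1) := Real.rpow_nonneg ht.le _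
      rw [Real.norm_eq_abs, abs_of_nonneg (by
        rw [hval t ht]
        have h0 : 0 ≤ ∫ p : E × E, |g p.1| * |g p.2| * rexp (-(‖p.1 - p.2‖ ^ 2 * t)) ∂μ2 :=
          integral_nonneg fun p => by positivity
        positivity)]
      rw [hval t ht]
      have hsplitpow : (π / t) ^ ((d : ℝ) / 2) = π ^ ((d : ℝ) / 2) * t ^ (-((d : ℝ) / 2)) := by
        rw [Real.div_rpow pi_pos.le ht.le, Real.rpow_neg ht.le, div_eq_mul_inv]
      calc t ^ (s - 1) * ∫ p : E × E, |g p.1| * |g p.2| * rexp (-(‖p.1 - p.2‖ ^ 2 * t)) ∂μ2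
          ≤ t ^ (s - 1) * (C * (π / t) ^ ((d : ℝ) / 2) * M) :=
            mul_le_mul_of_nonneg_left (hB2 t ht) hts
        _ = C * π ^ ((d : ℝ) / 2) * M * (t ^ (s - 1) * t ^ (-((d : ℝ) / 2))) := by
            rw [hsplitpow]; ring
        _ = C * π ^ ((d : ℝ) / 2) * M * t ^ (s - 1 - (d : ℝ) / 2) := by
            rw [← Real.rpow_add ht]
            ring_nf
  -- integrability of Φ on the product
  have hΦm : AEStronglyMeasurable Φ (μ2.prod ν) := mΦ.aestronglyMeasurable
  have hΦi : Integrable Φ (μ2.prod ν) := by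
    rw [MeasureTheory.integrable_prod_iff' hΦm]
    constructor
    · filter_upwards [ae_restrict_mem measurableSet_Ioi] with t ht
      exact hsec_int t ht
    · exact hW
  -- the diagonal is null
  have hdiag : μ2 {p : E × E | p.1 = p.2} = 0 := by
    rw [hμ2_def, MeasureTheory.Measure.volume_eq_prod]
    have hms : MeasurableSet {p : E × E | p.1 = p.2} :=
      (isClosed_eq continuous_fst continuous_snd).measurableSet
    rw [MeasureTheory.Measure.prod_apply hms]
    have : ∀ x : E, (Prod.mk x ⁻¹' {p : E × E | p.1 = p.2}) = {x} := by
      intro x; ext y; simp [eq_comm]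
    simp_rw [this]
    simp
  have hae : ∀ᵐ p : E × E ∂μ2, p.1 ≠ p.2 := by
    rw [ae_iff]
    simpa using hdiag
  -- Gamma function
  set Γs : ℝ := Real.Gamma s with hΓ_def
  have hΓpos : 0 < Γs := Real.Gamma_pos_of_pos hs
  -- kernel representation a.e.
  have hker : ∀ᵐ p : E × E ∂μ2,
      Γs⁻¹ * ∫ t : ℝ, Φ (p, t) ∂ν
        = g p.1 * g p.2 * ‖p.1 - p.2‖ ^ (-α) := by
    filter_upwards [hae] with p hp
    have hz : p.1 - p.2 ≠ 0 := sub_ne_zero.mpr hp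
    have hnz : 0 < ‖p.1 - p.2‖ := norm_pos_iff.mpr hz
    have hr : 0 < ‖p.1 - p.2‖ ^ 2 := by positivity
    have h1 : ∫ t : ℝ, Φ (p, t) ∂ν
        = g p.1 * g p.2 * ((1 / (‖p.1 - p.2‖ ^ 2)) ^ s * Γs) := by
      simp only [hΦ_def]
      rw [integral_const_mul]
      congr 1
      exact Real.integral_rpow_mul_exp_neg_mul_Ioi hs hr
    have h2 : (1 / (‖p.1 - p.2‖ ^ 2 : ℝ)) ^ s = ‖p.1 - p.2‖ ^ (-α) := by
      have h0 : (‖p.1 - p.2‖ ^ 2 : ℝ) = ‖p.1 - p.2‖ ^ (2:ℝ) := by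
        rw [← Real.rpow_natCast ‖p.1 - p.2‖ 2]; norm_num
      rw [one_div, h0, ← Real.rpow_neg (norm_nonneg _), ← Real.rpow_mul (norm_nonneg _)]
      congr 1
      rw [hs_def]; ring
    rw [h1, h2]
    field_simp
  -- integrability of F
  have hFi : Integrable (fun p : E × E => g p.1 * g p.2 * ‖p.1 - p.2‖ ^ (-α)) μ2 := by
    refine (hΦi.integral_prod_left.const_mul Γs⁻¹).congr hker
  refine ⟨hFi, ?_⟩
  -- the value
  have hvalue : ∫ p : E × E, g p.1 * g p.2 * ‖p.1 - p.2‖ ^ (-α) ∂μ2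
      = Γs⁻¹ * ∫ t : ℝ, (∫ p : E × E, Φ (p, t) ∂μ2) ∂ν := by
    rw [← integral_congr_ae hker, integral_const_mul]
    congr 1
    rw [← MeasureTheory.integral_prod _ hΦi, MeasureTheory.integral_prod_symm _ hΦi]
  have hpos : 0 ≤ ∫ t : ℝ, (∫ p : E × E, Φ (p, t) ∂μ2) ∂ν := by
    refine integral_nonneg_of_ae ?_
    filter_upwards [ae_restrict_mem measurableSet_Ioi] with t ht
    have hts : 0 ≤ t ^ (s - 1) := Real.rpow_nonneg (le_of_lt ht) _
    have h1 : ∫ p : E × E, Φ (p, t) ∂μ2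
        = t ^ (s - 1) * ∫ p : E × E, g p.1 * g p.2 * rexp (-(‖p.1 - p.2‖ ^ 2 * t)) ∂μ2 := by
      rw [← integral_const_mul]
      refine integral_congr_ae (Filter.Eventually.of_forall fun p => ?_)
      simp only [hΦ_def]; ring
    rw [h1]
    exact mul_nonneg hts (riesz_bilinear_gauss_nonneg g ht)
  rw [show (volume : Measure (E × E)) = μ2 from rfl] at *
  rw [hvalue]
  exact mul_nonneg (inv_nonneg.mpr hΓpos.le) hpos
end

section
/- Let d ≥ 1, σ₁ ∈ ℝ, let I ⊆ ℝ be an open interval, let u : I × ℝ^d → ℂ be smooth, and let W : I × ℝ^d → ℝ be a real-valued function such that i·∂_t u + Δ²u - σ₁·Δu + W·u = 0 pointwise on I × ℝ^d (Δ being the Laplacian in the space variable). Then pointwise on I × ℝ^d: ∂_t |u|² = -2·div Im(conj(u)·∇(Δu)) + 2·σ₁·div Im(conj(u)·∇u) + 2·div Im(J), where J is the vector field with components J_j = Σ_k ∂_k conj(u) · ∂_j∂_k u, all derivatives being in the space variable. -/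
open MeasureTheory Complex

noncomputable section

/-- Spatial partial derivative `∂_j f` of a complex-valued function on `ℝ^d`. -/
def pdC {d : ℕ} (j : Fin d) (f : EuclideanSpace ℝ (Fin d) → ℂ)
    (x : EuclideanSpace ℝ (Fin d)) : ℂ :=
  fderiv ℝ f x (EuclideanSpace.single j 1)

/-- Spatial Laplacian of a complex-valued function on `ℝ^d`:
the trace of the second Fréchet derivative. -/
def lapC {d : ℕ} (f : EuclideanSpace ℝ (Fin d) → ℂ)
    (x : EuclideanSpace ℝ (Fin d)) : ℂ :=
  ∑ i : Fin d, iteratedFDeriv ℝ 2 f x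
    ![EuclideanSpace.single i 1, EuclideanSpace.single i 1]

/-- Divergence of a real vector field on `ℝ^d`: `div V = Σ_j ∂_j V_j`. -/
def divR {d : ℕ} (V : EuclideanSpace ℝ (Fin d) → Fin d → ℝ)
    (x : EuclideanSpace ℝ (Fin d)) : ℝ :=
  ∑ j : Fin d, fderiv ℝ (fun y => V y j) x (EuclideanSpace.single j 1)


abbrev Esp (d : ℕ) := EuclideanSpace ℝ (Fin d)

variable {d : ℕ}


lemma pdC_smooth {f : Esp d → ℂ} (hf : ContDiff ℝ (⊤:ℕ∞) f) (j : Fin d) :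
    ContDiff ℝ (⊤:ℕ∞) (pdC j f) := by
  have h := hf.fderiv_right (m := (⊤:ℕ∞)) (by exact_mod_cast le_top)
  exact (ContinuousLinearMap.apply ℝ ℂ (EuclideanSpace.single j 1)).contDiff.comp h

lemma pdC_second {f : Esp d → ℂ} (hf : ContDiff ℝ (⊤:ℕ∞) f) (j k : Fin d) (x : Esp d) :
    pdC j (pdC k f) x = fderiv ℝ (fderiv ℝ f) x (EuclideanSpace.single j 1)
      (EuclideanSpace.single k 1) := by
  have h1 : ContDiff ℝ (⊤:ℕ∞) (fderiv ℝ f) := hf.fderiv_right (by exact_mod_cast le_top)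
  have h2 : HasFDerivAt (fderiv ℝ f) (fderiv ℝ (fderiv ℝ f) x) x :=
    (h1.differentiable (by simp) x).hasFDerivAt
  have h3 := h2.clm_apply (hasFDerivAt_const (EuclideanSpace.single k (1:ℝ)) x)
  have h4 := h3.fderiv
  show fderiv ℝ (fun y => (fderiv ℝ f y) (EuclideanSpace.single k 1)) x (EuclideanSpace.single j 1) = _
  rw [h4]
  simp

lemma pdC_comm {f : Esp d → ℂ} (hf : ContDiff ℝ (⊤:ℕ∞) f) (j k : Fin d) (x : Esp d) :
    pdC j (pdC k f) x = pdC k (pdC j f) x := by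
  rw [pdC_second hf, pdC_second hf]
  exact second_derivative_symmetric
    (fun y => ((hf.differentiable (by simp)) y).hasFDerivAt)
    (((hf.fderiv_right (m := (⊤:ℕ∞)) (by exact_mod_cast le_top)).differentiable
      (by simp) x).hasFDerivAt) _ _

lemma lapC_eq {f : Esp d → ℂ} (hf : ContDiff ℝ (⊤:ℕ∞) f) (x : Esp d) :
    lapC f x = ∑ i : Fin d, pdC i (pdC i f) x := by
  unfold lapC
  refine Finset.sum_congr rfl fun i _ => ?_
  rw [iteratedFDeriv_two_apply, pdC_second hf]
  simp

lemma lapC_smooth {f : Esp d → ℂ} (hf : ContDiff ℝ (⊤:ℕ∞) f) :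
    ContDiff ℝ (⊤:ℕ∞) (lapC f) := by
  have : lapC f = fun x => ∑ i : Fin d, pdC i (pdC i f) x := funext (lapC_eq hf)
  rw [this]
  exact ContDiff.sum fun i _ => pdC_smooth (pdC_smooth hf i) i

lemma pdC_conj {f : Esp d → ℂ} (hf : DifferentiableAt ℝ f x) (j : Fin d) :
    pdC j (fun y => (starRingEnd ℂ) (f y)) x = (starRingEnd ℂ) (pdC j f x) := by
  unfold pdC
  have : (fun y => (starRingEnd ℂ) (f y)) = (Complex.conjCLE : ℂ → ℂ) ∘ f := rfl
  rw [this, fderiv_comp x (Complex.conjCLE.differentiable.differentiableAt) hf,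
    Complex.conjCLE.fderiv]
  rfl

lemma conj_smooth {f : Esp d → ℂ} (hf : ContDiff ℝ (⊤:ℕ∞) f) :
    ContDiff ℝ (⊤:ℕ∞) (fun y => (starRingEnd ℂ) (f y)) := by
  exact (Complex.conjCLE.contDiff).comp hf

lemma pdC_mul {f g : Esp d → ℂ} (hf : DifferentiableAt ℝ f x) (hg : DifferentiableAt ℝ g x)
    (j : Fin d) :
    pdC j (fun y => f y * g y) x = f x * pdC j g x + pdC j f x * g x := by
  unfold pdC
  rw [fderiv_fun_mul hf hg]
  simp [mul_comm]

lemma pdC_sum {n : ℕ} {F : Fin n → Esp d → ℂ} (hF : ∀ k, DifferentiableAt ℝ (F k) x)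
    (j : Fin d) :
    pdC j (fun y => ∑ k, F k y) x = ∑ k, pdC j (F k) x := by
  unfold pdC
  rw [fderiv_fun_sum fun k _ => hF k]
  simp

lemma pd_im {f : Esp d → ℂ} (hf : DifferentiableAt ℝ f x) (v : Esp d) :
    fderiv ℝ (fun y => (f y).im) x v = (fderiv ℝ f x v).im := by
  have : (fun y => (f y).im) = (Complex.imCLM : ℂ → ℝ) ∘ f := rfl
  rw [this, fderiv_comp x (Complex.imCLM.differentiable.differentiableAt) hf]
  simp

lemma pdC_lapC_swap {f : Esp d → ℂ} (hf : ContDiff ℝ (⊤:ℕ∞) f) (j : Fin d) (x : Esp d) :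
    pdC j (lapC f) x = ∑ k, pdC k (pdC k (pdC j f)) x := by
  have hl : lapC f = fun y => ∑ k, pdC k (pdC k f) y := funext (lapC_eq hf)
  rw [hl, pdC_sum (fun k => ((pdC_smooth (pdC_smooth hf k) k).differentiable
    (by simp)).differentiableAt)]
  refine Finset.sum_congr rfl fun k _ => ?_
  rw [pdC_comm (pdC_smooth hf k) j k]
  congr 1
  funext y
  exact pdC_comm hf j k y

lemma hasDerivAt_normSq {f : ℝ → ℂ} {f' : ℂ} {t : ℝ} (hf : HasDerivAt f f' t) :
    HasDerivAt (fun s => Complex.normSq (f s))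
      (2 * ((starRingEnd ℂ) (f t) * f').re) t := by
  have hre : HasDerivAt (fun s => (f s).re) f'.re t :=
    Complex.reCLM.hasFDerivAt.comp_hasDerivAt t hf
  have him : HasDerivAt (fun s => (f s).im) f'.im t :=
    Complex.imCLM.hasFDerivAt.comp_hasDerivAt t hf
  have h := (hre.fun_mul hre).fun_add (him.fun_mul him)
  have heq : (fun s => Complex.normSq (f s))
      = fun s => (f s).re * (f s).re + (f s).im * (f s).im := by
    funext s; rw [Complex.normSq_apply]
  rw [heq]
  refine h.congr_deriv ?_
  simp [Complex.mul_re]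
  ring

lemma divR_im {F : Fin d → Esp d → ℂ} {x : Esp d} (hF : ∀ j, DifferentiableAt ℝ (F j) x) :
    divR (fun y j => (F j y).im) x = ∑ j, (pdC j (F j) x).im := by
  unfold divR
  exact Finset.sum_congr rfl fun j _ => pd_im (hF j) _


/-- **Local mass conservation law for the fourth-order Schrödinger equation**
(pointwise identity displayed in Section 4 of the paper). If `u` is smooth on
`I × ℝ^d` (`I = (t₁,t₂)` an open interval) and satisfies
`i∂_t u + Δ²u - σ₁Δu + W·u = 0` with `W` real-valued, then pointwise on `I × ℝ^d`:
`∂_t |u|² = -2 div Im(conj u · ∇(Δu)) + 2σ₁ div Im(conj u · ∇u) + 2 div Im(J)`,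
where `J_j = Σ_k ∂_k conj(u) · ∂_j ∂_k u`. -/
theorem local_mass_conservation (d : ℕ) (hd : 1 ≤ d) (σ₁ : ℝ) (t₁ t₂ : ℝ)
    (u : ℝ → EuclideanSpace ℝ (Fin d) → ℂ)
    (W : ℝ → EuclideanSpace ℝ (Fin d) → ℝ)
    (hu : ContDiffOn ℝ (⊤ : ℕ∞)
      (fun p : ℝ × EuclideanSpace ℝ (Fin d) => u p.1 p.2)
      (Set.Ioo t₁ t₂ ×ˢ Set.univ))
    (hpde : ∀ t ∈ Set.Ioo t₁ t₂, ∀ x,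
      Complex.I * deriv (fun s => u s x) t + lapC (lapC (u t)) x
        - (σ₁ : ℂ) * lapC (u t) x + (W t x : ℂ) * u t x = 0) :
    ∀ t ∈ Set.Ioo t₁ t₂, ∀ x,
      deriv (fun s => Complex.normSq (u s x)) t
        = -2 * divR (fun y j =>
              ((starRingEnd ℂ) (u t y) * pdC j (lapC (u t)) y).im) x
          + 2 * σ₁ * divR (fun y j =>
              ((starRingEnd ℂ) (u t y) * pdC j (u t) y).im) x
          + 2 * divR (fun y j =>
              (∑ k, pdC k (fun z => (starRingEnd ℂ) (u t z)) y
                * pdC j (pdC k (u t)) y).im) x := by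
  intro t ht x
  have hopen : IsOpen (Set.Ioo t₁ t₂ ×ˢ (Set.univ : Set (Esp d))) :=
    isOpen_Ioo.prod isOpen_univ
  set g : Esp d → ℂ := u t with hgdef
  -- spatial smoothness
  have hg : ContDiff ℝ (⊤:ℕ∞) g := by
    rw [contDiff_iff_contDiffAt]
    intro y
    have hA : ContDiffAt ℝ (⊤:ℕ∞) (fun p : ℝ × Esp d => u p.1 p.2) (t, y) :=
      hu.contDiffAt (hopen.mem_nhds ⟨ht, trivial⟩)
    exact hA.comp y (contDiffAt_const.prodMk contDiffAt_id)
  have diffA : ∀ (h : Esp d → ℂ), ContDiff ℝ (⊤:ℕ∞) h → ∀ y, DifferentiableAt ℝ h y :=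
    fun h hh y => (hh.differentiable (by simp)).differentiableAt
  have hc : ContDiff ℝ (⊤:ℕ∞) (fun z => (starRingEnd ℂ) (g z)) := conj_smooth hg
  have hlap : ContDiff ℝ (⊤:ℕ∞) (lapC g) := lapC_smooth hg
  -- time derivative
  have hft : DifferentiableAt ℝ (fun s => u s x) t := by
    have hA : ContDiffAt ℝ (⊤:ℕ∞) (fun p : ℝ × Esp d => u p.1 p.2) (t, x) :=
      hu.contDiffAt (hopen.mem_nhds ⟨ht, trivial⟩)
    exact (hA.differentiableAt (by simp)).comp t
      ((differentiableAt_id (𝕜 := ℝ) (x := t)).prodMk (differentiableAt_const x))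
  set u' : ℂ := deriv (fun s => u s x) t with hu'def
  set cx : ℂ := (starRingEnd ℂ) (g x) with hcxdef
  -- LHS
  have hL : deriv (fun s => Complex.normSq (u s x)) t = 2 * (cx * u').re :=
    (hasDerivAt_normSq hft.hasDerivAt).deriv
  -- PDE consequence
  have hP : (cx * u').re
      = -(cx * lapC (lapC g) x).im + σ₁ * (cx * lapC g x).im := by
    have h := hpde t ht x
    have h2 : Complex.I * (cx * u') + cx * lapC (lapC g) x
        - (σ₁:ℂ) * (cx * lapC g x) + (W t x : ℂ) * (cx * g x) = 0 := by
      have := congrArg (fun z => cx * z) h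
      simp only [mul_zero] at this
      linear_combination this
    have h3 := congrArg Complex.im h2
    have hreal : (cx * g x).im = 0 := by
      rw [hcxdef, ← Complex.normSq_eq_conj_mul_self]
      simp
    simp only [Complex.add_im, Complex.sub_im, Complex.I_mul_im, Complex.zero_im] at h3
    have him1 : ((σ₁:ℂ) * (cx * lapC g x)).im = σ₁ * (cx * lapC g x).im := by
      simp [Complex.mul_im]
    have him2 : ((W t x : ℂ) * (cx * g x)).im = W t x * (cx * g x).im := by
      simp [Complex.mul_im]
    rw [him1, him2, hreal] at h3
    linarith
  -- notation
  set c : Esp d → ℂ := fun z => (starRingEnd ℂ) (g z) with hcdef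
  have hkc : ∀ k : Fin d, pdC k c = fun y => (starRingEnd ℂ) (pdC k g y) :=
    fun k => funext fun y => pdC_conj (diffA g hg y) k
  -- Term 1
  have hT1 : divR (fun y j => (c y * pdC j (lapC g) y).im) x
      = (cx * lapC (lapC g) x).im
        + ∑ j, ((starRingEnd ℂ) (pdC j g x) * pdC j (lapC g) x).im := by
    rw [divR_im (fun j => (diffA _ hc x).fun_mul (diffA _ (pdC_smooth hlap j) x))]
    have step : ∀ j : Fin d, pdC j (fun y => c y * pdC j (lapC g) y) x
        = cx * pdC j (pdC j (lapC g)) x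
          + (starRingEnd ℂ) (pdC j g x) * pdC j (lapC g) x := by
      intro j
      rw [pdC_mul (diffA _ hc x) (diffA _ (pdC_smooth hlap j) x) j,
        pdC_conj (diffA g hg x) j]
    simp only [step, Complex.add_im, Finset.sum_add_distrib]
    congr 1
    rw [← Complex.im_sum, ← Finset.mul_sum, ← lapC_eq hlap x]
  -- Term 2
  have hT2 : divR (fun y j => (c y * pdC j g y).im) x = (cx * lapC g x).im := by
    rw [divR_im (fun j => (diffA _ hc x).fun_mul (diffA _ (pdC_smooth hg j) x))]
    have step : ∀ j : Fin d, pdC j (fun y => c y * pdC j g y) x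
        = cx * pdC j (pdC j g) x
          + (starRingEnd ℂ) (pdC j g x) * pdC j g x := by
      intro j
      rw [pdC_mul (diffA _ hc x) (diffA _ (pdC_smooth hg j) x) j,
        pdC_conj (diffA g hg x) j]
    have hz : ∀ j : Fin d, ((starRingEnd ℂ) (pdC j g x) * pdC j g x).im = 0 := by
      intro j
      rw [← Complex.normSq_eq_conj_mul_self]
      simp
    simp only [step, Complex.add_im, Finset.sum_add_distrib, hz, Finset.sum_const_zero,
      add_zero]
    rw [← Complex.im_sum, ← Finset.mul_sum, ← lapC_eq hg x]
  -- Term 3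
  have hT3 : divR (fun y j => (∑ k, pdC k c y * pdC j (pdC k g) y).im) x
      = ∑ k, ((starRingEnd ℂ) (pdC k g x) * pdC k (lapC g) x).im := by
    have hprod : ∀ (j k : Fin d) (y : Esp d),
        DifferentiableAt ℝ (fun z => pdC k c z * pdC j (pdC k g) z) y :=
      fun j k y => (diffA _ (pdC_smooth hc k) y).mul
        (diffA _ (pdC_smooth (pdC_smooth hg k) j) y)
    rw [divR_im (fun j => DifferentiableAt.fun_sum (fun k _ => hprod j k x))]
    have step : ∀ j : Fin d, pdC j (fun y => ∑ k, pdC k c y * pdC j (pdC k g) y) x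
        = ∑ k, ((starRingEnd ℂ) (pdC k g x) * pdC j (pdC j (pdC k g)) x
            + (starRingEnd ℂ) (pdC j (pdC k g) x) * pdC j (pdC k g) x) := by
      intro j
      rw [pdC_sum (fun k => hprod j k x) j]
      refine Finset.sum_congr rfl fun k _ => ?_
      rw [pdC_mul (diffA _ (pdC_smooth hc k) x)
        (diffA _ (pdC_smooth (pdC_smooth hg k) j) x) j]
      have h1 : pdC k c x = (starRingEnd ℂ) (pdC k g x) := pdC_conj (diffA g hg x) k
      have h2 : pdC j (pdC k c) x = (starRingEnd ℂ) (pdC j (pdC k g) x) := by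
        rw [hkc k]
        exact pdC_conj (diffA _ (pdC_smooth hg k) x) j
      rw [h1, h2]
    have hz : ∀ j k : Fin d,
        ((starRingEnd ℂ) (pdC j (pdC k g) x) * pdC j (pdC k g) x).im = 0 := by
      intro j k
      rw [← Complex.normSq_eq_conj_mul_self]
      simp
    simp only [step, Complex.im_sum, Complex.add_im, Finset.sum_add_distrib, hz,
      Finset.sum_const_zero, add_zero]
    rw [Finset.sum_comm]
    refine Finset.sum_congr rfl fun k _ => ?_
    rw [← Complex.im_sum, ← Finset.mul_sum, ← pdC_lapC_swap hg k x]
  rw [hL, hT1, hT2, hT3, hP]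
  ring

end
end

section
/- Let d ≥ 1, σ₁ ∈ ℝ, let I ⊆ ℝ be an open interval, and let u : I × ℝ^d → ℂ be smooth with u(t,·) compactly supported in a fixed compact set for all t ∈ I, and let W : I × ℝ^d → ℝ be real-valued with i·∂_t u + Δ²u - σ₁·Δu + W·u = 0 pointwise. Let φ : ℝ^d → ℝ be a smooth compactly supported function. Then there is a constant C > 0 depending only on φ such that for every t ∈ I, |d/dt ∫_{ℝ^d} φ(x)·|u(t,x)|² dx| ≤ C·(|σ₁|·‖u(t)‖_{L²}·‖∇u(t)‖_{L²} + ‖u(t)‖_{L²}·‖Δu(t)‖_{L²} + ‖∇u(t)‖_{L²}·‖Δu(t)‖_{L²}). -/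
open MeasureTheory Complex

noncomputable section

/-- The `L²` norm `‖f‖_{L²} = (∫ |f|²)^{1/2}` of `f : ℝ^d → ℂ`. -/
def L2norm {d : ℕ} (f : EuclideanSpace ℝ (Fin d) → ℂ) : ℝ :=
  Real.sqrt (∫ x, Complex.normSq (f x))

/-- The `L²` norm of the spatial gradient, `‖∇f‖_{L²} = (∫ Σ_j |∂_j f|²)^{1/2}`. -/
def L2gradNorm {d : ℕ} (f : EuclideanSpace ℝ (Fin d) → ℂ) : ℝ :=
  Real.sqrt (∫ x, ∑ j : Fin d, Complex.normSq (pdC j f x))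

/-- The `L²` norm of the spatial Laplacian, `‖Δf‖_{L²} = (∫ |Δf|²)^{1/2}`. -/
def L2lapNorm {d : ℕ} (f : EuclideanSpace ℝ (Fin d) → ℂ) : ℝ :=
  Real.sqrt (∫ x, Complex.normSq (lapC f x))

namespace LocMass

variable {d : ℕ}

local notation "E" => EuclideanSpace ℝ (Fin d)

lemma contDiff_pdC (j : Fin d) {f : E → ℂ} (hf : ContDiff ℝ (⊤ : ℕ∞) f) :
    ContDiff ℝ (⊤ : ℕ∞) (pdC j f) := by
  have h1 : ContDiff ℝ (⊤ : ℕ∞) (fderiv ℝ f) := hf.fderiv_right (by exact_mod_cast le_top)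
  exact h1.clm_apply contDiff_const

lemma hcs_pdC (j : Fin d) {f : E → ℂ} (hf : HasCompactSupport f) :
    HasCompactSupport (pdC j f) :=
  (hf.fderiv ℝ).comp_left (g := fun L : E →L[ℝ] ℂ => L (EuclideanSpace.single j 1)) rfl

lemma contDiff_conj {f : E → ℂ} (hf : ContDiff ℝ (⊤ : ℕ∞) f) :
    ContDiff ℝ (⊤ : ℕ∞) (fun x => (starRingEnd ℂ) (f x)) :=
  Complex.conjCLE.toContinuousLinearMap.contDiff.comp hf

lemma hcs_conj {f : E → ℂ} (hf : HasCompactSupport f) :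
    HasCompactSupport (fun x => (starRingEnd ℂ) (f x)) :=
  hf.comp_left (g := fun z : ℂ => (starRingEnd ℂ) z) (by simp)

lemma pdC_conj (j : Fin d) {f : E → ℂ} (hf : ContDiff ℝ (⊤ : ℕ∞) f) :
    pdC j (fun x => (starRingEnd ℂ) (f x)) = fun x => (starRingEnd ℂ) (pdC j f x) := by
  funext x
  have hd' : DifferentiableAt ℝ f x := (hf.differentiable (by simp)) x
  have : fderiv ℝ (fun y => (starRingEnd ℂ) (f y)) x
      = (Complex.conjCLE.toContinuousLinearMap).comp (fderiv ℝ f x) :=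
    (Complex.conjCLE.toContinuousLinearMap.hasFDerivAt.comp x hd'.hasFDerivAt).fderiv
  simp [pdC, this]

lemma lapC_eq {f : E → ℂ} (hf : ContDiff ℝ (⊤ : ℕ∞) f) :
    lapC f = fun x => ∑ i : Fin d, pdC i (pdC i f) x := by
  funext x
  unfold lapC
  refine Finset.sum_congr rfl fun i _ => ?_
  rw [iteratedFDeriv_two_apply]
  have hdf : ContDiff ℝ (⊤ : ℕ∞) (fderiv ℝ f) := hf.fderiv_right (by exact_mod_cast le_top)
  have : pdC i (pdC i f) x
      = fderiv ℝ (fun y => (fderiv ℝ f y) (EuclideanSpace.single i 1)) x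
          (EuclideanSpace.single i 1) := rfl
  rw [this, fderiv_clm_apply ((hdf.differentiable (by simp)) x)
    (differentiableAt_const _)]
  simp [Matrix.cons_val_zero, Matrix.cons_val_one]

lemma contDiff_lapC {f : E → ℂ} (hf : ContDiff ℝ (⊤ : ℕ∞) f) :
    ContDiff ℝ (⊤ : ℕ∞) (lapC f) := by
  rw [lapC_eq hf]
  exact ContDiff.sum fun i _ => contDiff_pdC i (contDiff_pdC i hf)

lemma hcs_finsum {ι : Type*} {β : Type*} [AddCommMonoid β] [TopologicalSpace β]
    (s : Finset ι) (g : ι → E → β)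
    (h : ∀ i, HasCompactSupport (g i)) : HasCompactSupport (fun x => ∑ i ∈ s, g i x) := by
  classical
  induction s using Finset.induction_on with
  | empty => simp only [Finset.sum_empty]; exact HasCompactSupport.zero (α := E) (β := β)
  | insert _ _ hx ih =>
      simp only [Finset.sum_insert hx]
      exact (h _).add ih

lemma hcs_lapC {f : E → ℂ} (hf : ContDiff ℝ (⊤ : ℕ∞) f) (hc : HasCompactSupport f) :
    HasCompactSupport (lapC f) := by
  rw [lapC_eq hf]
  exact hcs_finsum _ _ fun i => hcs_pdC i (hcs_pdC i hc)

lemma lapC_conj {f : E → ℂ} (hf : ContDiff ℝ (⊤ : ℕ∞) f) :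
    lapC (fun x => (starRingEnd ℂ) (f x)) = fun x => (starRingEnd ℂ) (lapC f x) := by
  rw [lapC_eq (contDiff_conj hf), lapC_eq hf]
  funext x
  rw [map_sum]
  refine Finset.sum_congr rfl fun i _ => ?_
  rw [pdC_conj i hf, pdC_conj i (contDiff_pdC i hf)]

lemma pdC_mul {a b : E → ℂ} (ha : ContDiff ℝ (⊤ : ℕ∞) a) (hb : ContDiff ℝ (⊤ : ℕ∞) b)
    (j : Fin d) (x : E) :
    pdC j (fun y => a y * b y) x = pdC j a x * b x + a x * pdC j b x := by
  have ha' : DifferentiableAt ℝ a x := ha.differentiable (by simp) x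
  have hb' : DifferentiableAt ℝ b x := hb.differentiable (by simp) x
  simp [pdC, fderiv_fun_mul ha' hb', mul_comm]
  ring

lemma ibp {a b : E → ℂ} (ha : ContDiff ℝ (⊤ : ℕ∞) a) (hb : ContDiff ℝ (⊤ : ℕ∞) b)
    (hca : HasCompactSupport a) (j : Fin d) :
    ∫ x, a x * pdC j b x = -∫ x, pdC j a x * b x := by
  have h1 : Integrable (fun x => pdC j a x * b x) :=
    ((contDiff_pdC j ha).continuous.mul hb.continuous).integrable_of_hasCompactSupport
      ((hcs_pdC j hca).mul_right)
  have h2 : Integrable (fun x => a x * pdC j b x) :=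
    (ha.continuous.mul (contDiff_pdC j hb).continuous).integrable_of_hasCompactSupport
      (hca.mul_right)
  have h3 : Integrable (fun x => a x * b x) :=
    (ha.continuous.mul hb.continuous).integrable_of_hasCompactSupport hca.mul_right
  exact integral_mul_fderiv_eq_neg_fderiv_mul_of_integrable h1 h2 h3
    (fun x _ => ha.differentiable (by simp) x) (fun x _ => hb.differentiable (by simp) x)

lemma cauchy_schwarz {f g : E → ℂ} (hf : Continuous f) (hg : Continuous g)
    (hcf : HasCompactSupport f) (hcg : HasCompactSupport g) :
    ∫ x, ‖f x‖ * ‖g x‖ ≤ Real.sqrt (∫ x, Complex.normSq (f x)) *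
      Real.sqrt (∫ x, Complex.normSq (g x)) := by
  have hF : MemLp (fun x => ‖f x‖) (ENNReal.ofReal 2) (volume) := by
    have := (hf.norm.memLp_of_hasCompactSupport (μ := volume) (p := 2) hcf.norm)
    simpa using this
  have hG : MemLp (fun x => ‖g x‖) (ENNReal.ofReal 2) (volume) := by
    have := (hg.norm.memLp_of_hasCompactSupport (μ := volume) (p := 2) hcg.norm)
    simpa using this
  have h := integral_mul_le_Lp_mul_Lq_of_nonneg
    (Real.holderConjugate_iff_eq_conjExponent (by norm_num) |>.2 (by norm_num) :
      Real.HolderConjugate 2 2)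
    (Filter.Eventually.of_forall fun x => norm_nonneg _)
    (Filter.Eventually.of_forall fun x => norm_nonneg _) hF hG
  calc ∫ x, ‖f x‖ * ‖g x‖ ≤ (∫ x, ‖f x‖ ^ (2:ℝ)) ^ (1/2:ℝ) * (∫ x, ‖g x‖ ^ (2:ℝ)) ^ (1/2:ℝ) := h
    _ = Real.sqrt (∫ x, Complex.normSq (f x)) * Real.sqrt (∫ x, Complex.normSq (g x)) := by
        rw [Real.sqrt_eq_rpow, Real.sqrt_eq_rpow]
        congr 2
        · refine integral_congr_ae (Filter.Eventually.of_forall fun x => ?_)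
          show ‖f x‖ ^ (2:ℝ) = Complex.normSq (f x)
          rw [Complex.normSq_eq_norm_sq, ← Real.rpow_natCast]
          norm_num
        · refine integral_congr_ae (Filter.Eventually.of_forall fun x => ?_)
          show ‖g x‖ ^ (2:ℝ) = Complex.normSq (g x)
          rw [Complex.normSq_eq_norm_sq, ← Real.rpow_natCast]
          norm_num

lemma hasDerivAt_normSq_comp {w : ℝ → ℂ} {w' : ℂ} {s : ℝ} (hw : HasDerivAt w w' s) :
    HasDerivAt (fun r => Complex.normSq (w r)) (2 * ((starRingEnd ℂ) (w s) * w').re) s := by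
  have hre : HasDerivAt (fun r => (w r).re) w'.re s :=
    (Complex.reCLM.hasFDerivAt.comp_hasDerivAt s hw)
  have him : HasDerivAt (fun r => (w r).im) w'.im s :=
    (Complex.imCLM.hasFDerivAt.comp_hasDerivAt s hw)
  have h : HasDerivAt (fun r => (w r).re * (w r).re + (w r).im * (w r).im)
      (w'.re * (w s).re + (w s).re * w'.re + (w'.im * (w s).im + (w s).im * w'.im)) s :=
    (hre.mul hre).add (him.mul him)
  have : (fun r => (w r).re * (w r).re + (w r).im * (w r).im)
      = fun r => Complex.normSq (w r) := by
    funext r; simp [Complex.normSq_apply]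
  rw [this] at h
  convert h using 1
  simp [Complex.mul_re, Complex.conj_re, Complex.conj_im]
  ring


lemma pdC_add {a b : E → ℂ} (ha : ContDiff ℝ (⊤ : ℕ∞) a) (hb : ContDiff ℝ (⊤ : ℕ∞) b)
    (j : Fin d) (x : E) :
    pdC j (fun y => a y + b y) x = pdC j a x + pdC j b x := by
  have ha' : DifferentiableAt ℝ a x := ha.differentiable (by simp) x
  have hb' : DifferentiableAt ℝ b x := hb.differentiable (by simp) x
  simp [pdC, fderiv_fun_add ha' hb']

lemma im_integral_bound {h : E → ℂ} (hh : Continuous h) (hch : HasCompactSupport h)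
    {b : E → ℝ} (hb : Continuous b) (hcb : HasCompactSupport b)
    (hbd : ∀ x, ‖h x‖ ≤ b x) :
    |(∫ x, h x).im| ≤ ∫ x, b x := by
  refine le_trans (Complex.abs_im_le_norm _) ?_
  refine le_trans (norm_integral_le_integral_norm _) ?_
  exact integral_mono (hh.integrable_of_hasCompactSupport hch).norm
    (hb.integrable_of_hasCompactSupport hcb) hbd

lemma sqrt_normSq_pdC_le (j : Fin d) {f : E → ℂ} (hf : ContDiff ℝ (⊤ : ℕ∞) f)
    (hcf : HasCompactSupport f) :
    Real.sqrt (∫ x, Complex.normSq (pdC j f x)) ≤ L2gradNorm f := by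
  refine Real.sqrt_le_sqrt (integral_mono ?_ ?_ ?_)
  · exact ((Complex.continuous_normSq.comp (contDiff_pdC j hf).continuous)).integrable_of_hasCompactSupport
      ((hcs_pdC j hcf).comp_left (g := Complex.normSq) (by simp))
  · refine (continuous_finset_sum _ fun i _ => Complex.continuous_normSq.comp
      (contDiff_pdC i hf).continuous).integrable_of_hasCompactSupport ?_
    exact hcs_finsum _ _ fun i => (hcs_pdC i hcf).comp_left (g := Complex.normSq) (by simp)
  · intro x
    exact Finset.single_le_sum (f := fun i => Complex.normSq (pdC i f x))
      (fun i _ => Complex.normSq_nonneg _) (Finset.mem_univ j)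

lemma norm_conj' (z : ℂ) : ‖(starRingEnd ℂ) z‖ = ‖z‖ := by
  simp

lemma est1 (hd0 : 0 < d) {Φ : E → ℂ} (hΦ : ContDiff ℝ (⊤ : ℕ∞) Φ) (hcΦ : HasCompactSupport Φ)
    (hreal : ∀ x, (Φ x).im = 0)
    {f : E → ℂ} (hf : ContDiff ℝ (⊤ : ℕ∞) f) (hcf : HasCompactSupport f)
    {M : ℝ} (hM : ∀ (i : Fin d) x, ‖pdC i Φ x‖ ≤ M) :
    |(∫ x, Φ x * ((starRingEnd ℂ) (f x) * lapC f x)).im|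
      ≤ (d : ℝ) * M * (L2norm f * L2gradNorm f) := by
  set c : E → ℂ := fun x => (starRingEnd ℂ) (f x) with hc
  have hc_cd : ContDiff ℝ (⊤ : ℕ∞) c := contDiff_conj hf
  have hc_cs : HasCompactSupport c := hcs_conj hcf
  set g : E → ℂ := fun x => Φ x * c x with hg
  have hg_cd : ContDiff ℝ (⊤ : ℕ∞) g := hΦ.mul hc_cd
  have hg_cs : HasCompactSupport g := hcΦ.mul_right
  have hM0 : 0 ≤ M := le_trans (norm_nonneg _) (hM ⟨0, hd0⟩ 0)
  -- rewrite the integral as a finite sum of integrals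
  have hsplit : (∫ x, Φ x * (c x * lapC f x))
      = ∑ i : Fin d, ∫ x, g x * pdC i (pdC i f) x := by
    rw [← integral_finset_sum]
    · refine integral_congr_ae (Filter.Eventually.of_forall fun x => ?_)
      rw [lapC_eq hf]
      simp only [hg, Finset.mul_sum, mul_assoc]
    · intro i _
      exact (hg_cd.continuous.mul (contDiff_pdC i (contDiff_pdC i hf)).continuous)
        |>.integrable_of_hasCompactSupport hg_cs.mul_right
  -- integrate by parts in each term
  have hibp : ∀ i : Fin d, ∫ x, g x * pdC i (pdC i f) x
      = -(∫ x, (pdC i Φ x * c x) * pdC i f x) - ∫ x, (Φ x * pdC i c x) * pdC i f x := by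
    intro i
    rw [ibp hg_cd (contDiff_pdC i hf) hg_cs i]
    have hsum : (fun x => pdC i g x * pdC i f x)
        = fun x => (pdC i Φ x * c x) * pdC i f x + (Φ x * pdC i c x) * pdC i f x := by
      funext x
      rw [show pdC i g x = pdC i Φ x * c x + Φ x * pdC i c x from pdC_mul hΦ hc_cd i x]
      ring
    rw [hsum, integral_add, neg_add]
    · ring
    · exact (((contDiff_pdC i hΦ).continuous.mul hc_cd.continuous).mul
        (contDiff_pdC i hf).continuous).integrable_of_hasCompactSupport
        ((hcs_pdC i hcΦ).mul_right.mul_right)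
    · exact ((hΦ.continuous.mul (contDiff_pdC i hc_cd).continuous).mul
        (contDiff_pdC i hf).continuous).integrable_of_hasCompactSupport
        (hcΦ.mul_right.mul_right)
  -- second term in each summand is real, hence has zero imaginary part
  have hzero : ∀ i : Fin d, (∫ x, (Φ x * pdC i c x) * pdC i f x).im = 0 := by
    intro i
    have hint : Integrable (fun x => (Φ x * pdC i c x) * pdC i f x) :=
      ((hΦ.continuous.mul (contDiff_pdC i hc_cd).continuous).mul
        (contDiff_pdC i hf).continuous).integrable_of_hasCompactSupport
        (hcΦ.mul_right.mul_right)
    have him := (integral_im (𝕜 := ℂ) (μ := volume) hint).symm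
    simp only [RCLike.im_to_complex] at him
    rw [him]
    refine integral_eq_zero_of_ae (Filter.Eventually.of_forall fun x => ?_)
    show (Φ x * pdC i c x * pdC i f x).im = 0
    have hpc : pdC i c x = (starRingEnd ℂ) (pdC i f x) := by
      rw [hc, pdC_conj i hf]
    rw [hpc]
    have : Φ x * (starRingEnd ℂ) (pdC i f x) * pdC i f x
        = Φ x * ((Complex.normSq (pdC i f x) : ℝ) : ℂ) := by
      rw [mul_assoc]
      congr 1
      rw [mul_comm, Complex.mul_conj]
    rw [this]
    simp [Complex.mul_im, hreal x]
  -- bound each remaining term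
  have hterm : ∀ i : Fin d, |(∫ x, (pdC i Φ x * c x) * pdC i f x).im|
      ≤ M * (L2norm f * L2gradNorm f) := by
    intro i
    have hb : ∀ x, ‖(pdC i Φ x * c x) * pdC i f x‖
        ≤ M * (‖f x‖ * ‖pdC i f x‖) := by
      intro x
      rw [norm_mul, norm_mul, hc]
      simp only [norm_conj']
      rw [mul_assoc]
      exact mul_le_mul_of_nonneg_right (hM i x)
        (mul_nonneg (norm_nonneg _) (norm_nonneg _))
    have h1 : |(∫ x, (pdC i Φ x * c x) * pdC i f x).im|
        ≤ ∫ x, M * (‖f x‖ * ‖pdC i f x‖) := by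
      refine im_integral_bound ?_ ?_ ?_ ?_ hb
      · exact ((contDiff_pdC i hΦ).continuous.mul hc_cd.continuous).mul
          (contDiff_pdC i hf).continuous
      · exact (hcs_pdC i hcΦ).mul_right.mul_right
      · exact continuous_const.mul (hf.continuous.norm.mul (contDiff_pdC i hf).continuous.norm)
      · refine HasCompactSupport.mul_left ?_
        exact hcf.norm.mul_right
    rw [integral_const_mul] at h1
    refine h1.trans (mul_le_mul_of_nonneg_left ?_ hM0)
    refine le_trans (cauchy_schwarz hf.continuous (contDiff_pdC i hf).continuous hcf
      (hcs_pdC i hcf)) ?_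
    exact mul_le_mul_of_nonneg_left (sqrt_normSq_pdC_le i hf hcf) (Real.sqrt_nonneg _)
  -- put everything together
  rw [hsplit]
  have : (∑ i : Fin d, ∫ x, g x * pdC i (pdC i f) x).im
      = ∑ i : Fin d, -((∫ x, (pdC i Φ x * c x) * pdC i f x).im) := by
    rw [Complex.im_sum]
    refine Finset.sum_congr rfl fun i _ => ?_
    rw [hibp i]
    simp [hzero i]
  rw [this]
  refine le_trans (Finset.abs_sum_le_sum_abs _ _) ?_
  calc ∑ i : Fin d, |-((∫ x, (pdC i Φ x * c x) * pdC i f x).im)|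
      ≤ ∑ _i : Fin d, M * (L2norm f * L2gradNorm f) := by
        refine Finset.sum_le_sum fun i _ => ?_
        rw [abs_neg]; exact hterm i
    _ = (d : ℝ) * M * (L2norm f * L2gradNorm f) := by
        rw [Finset.sum_const, Finset.card_univ, Fintype.card_fin, nsmul_eq_mul, mul_assoc]

lemma est2 (hd0 : 0 < d) {Φ : E → ℂ} (hΦ : ContDiff ℝ (⊤ : ℕ∞) Φ) (hcΦ : HasCompactSupport Φ)
    (hreal : ∀ x, (Φ x).im = 0)
    {f : E → ℂ} (hf : ContDiff ℝ (⊤ : ℕ∞) f) (hcf : HasCompactSupport f)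
    {M : ℝ} (hM1 : ∀ (i : Fin d) x, ‖pdC i Φ x‖ ≤ M)
    (hM2 : ∀ (i : Fin d) x, ‖pdC i (pdC i Φ) x‖ ≤ M) :
    |(∫ x, Φ x * ((starRingEnd ℂ) (f x) * lapC (lapC f) x)).im|
      ≤ (d : ℝ) * M * (L2norm f * L2lapNorm f)
        + 2 * ((d : ℝ) * M * (L2gradNorm f * L2lapNorm f)) := by
  set c : E → ℂ := fun x => (starRingEnd ℂ) (f x) with hc
  have hc_cd : ContDiff ℝ (⊤ : ℕ∞) c := contDiff_conj hf
  have hc_cs : HasCompactSupport c := hcs_conj hcf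
  set v : E → ℂ := lapC f with hvdef
  have hv_cd : ContDiff ℝ (⊤ : ℕ∞) v := contDiff_lapC hf
  have hv_cs : HasCompactSupport v := hcs_lapC hf hcf
  set g : E → ℂ := fun x => Φ x * c x with hg
  have hg_cd : ContDiff ℝ (⊤ : ℕ∞) g := hΦ.mul hc_cd
  have hg_cs : HasCompactSupport g := hcΦ.mul_right
  have hM0 : 0 ≤ M := le_trans (norm_nonneg _) (hM1 ⟨0, hd0⟩ 0)
  have hcc : ∀ (h₁ h₂ h₃ : E → ℂ), ContDiff ℝ (⊤ : ℕ∞) h₁ → ContDiff ℝ (⊤ : ℕ∞) h₂ →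
      ContDiff ℝ (⊤ : ℕ∞) h₃ → HasCompactSupport h₁ →
      Integrable (fun x => h₁ x * h₂ x * h₃ x) := by
    intro h₁ h₂ h₃ H1 H2 H3 Hc
    exact ((H1.continuous.mul H2.continuous).mul H3.continuous).integrable_of_hasCompactSupport
      (Hc.mul_right.mul_right)
  -- split
  have hsplit : (∫ x, Φ x * (c x * lapC v x))
      = ∑ i : Fin d, ∫ x, g x * pdC i (pdC i v) x := by
    rw [← integral_finset_sum]
    · refine integral_congr_ae (Filter.Eventually.of_forall fun x => ?_)
      rw [lapC_eq hv_cd]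
      simp only [hg, Finset.mul_sum, mul_assoc]
    · intro i _
      exact (hg_cd.continuous.mul (contDiff_pdC i (contDiff_pdC i hv_cd)).continuous)
        |>.integrable_of_hasCompactSupport hg_cs.mul_right
  -- double integration by parts
  have hibp : ∀ i : Fin d, ∫ x, g x * pdC i (pdC i v) x
      = ∫ x, pdC i (pdC i g) x * v x := by
    intro i
    rw [ibp hg_cd (contDiff_pdC i hv_cd) hg_cs i,
      ibp (contDiff_pdC i hg_cd) hv_cd (hcs_pdC i hg_cs) i, neg_neg]
  -- expansion of the second derivative of g
  have hexp : ∀ (i : Fin d) (x : E), pdC i (pdC i g) x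
      = pdC i (pdC i Φ) x * c x + 2 * (pdC i Φ x * pdC i c x)
        + Φ x * pdC i (pdC i c) x := by
    intro i x
    have h1 : pdC i g = fun y => pdC i Φ y * c y + Φ y * pdC i c y := by
      funext y; exact pdC_mul hΦ hc_cd i y
    rw [h1, pdC_add ((contDiff_pdC i hΦ).mul hc_cd) (hΦ.mul (contDiff_pdC i hc_cd)) i x,
      pdC_mul (contDiff_pdC i hΦ) hc_cd i x, pdC_mul hΦ (contDiff_pdC i hc_cd) i x]
    ring
  -- the ∑ of third pieces is real
  have hthird : (∑ i : Fin d, ∫ x, (Φ x * pdC i (pdC i c) x) * v x).im = 0 := by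
    have hsum : ∑ i : Fin d, ∫ x, (Φ x * pdC i (pdC i c) x) * v x
        = ∫ x, Φ x * ((Complex.normSq (v x) : ℝ) : ℂ) := by
      rw [← integral_finset_sum]
      · refine integral_congr_ae (Filter.Eventually.of_forall fun x => ?_)
        show ∑ i : Fin d, (Φ x * pdC i (pdC i c) x) * v x = Φ x * ((Complex.normSq (v x) : ℝ) : ℂ)
        have h2 : ∑ i : Fin d, pdC i (pdC i c) x = (starRingEnd ℂ) (v x) := by
          have h3 := lapC_eq hc_cd
          have h4 : lapC c x = ∑ i : Fin d, pdC i (pdC i c) x := by rw [h3]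
          rw [← h4, hc, lapC_conj hf]
        calc ∑ i : Fin d, (Φ x * pdC i (pdC i c) x) * v x
            = Φ x * ((∑ i : Fin d, pdC i (pdC i c) x) * v x) := by
              rw [Finset.sum_mul, Finset.mul_sum]
              refine Finset.sum_congr rfl fun i _ => by ring
          _ = Φ x * ((Complex.normSq (v x) : ℝ) : ℂ) := by
              rw [h2, mul_comm ((starRingEnd ℂ) (v x)), Complex.mul_conj]
      · intro i _
        exact hcc _ _ _ hΦ (contDiff_pdC i (contDiff_pdC i hc_cd)) hv_cd hcΦ
    rw [hsum]
    have hint : Integrable (fun x => Φ x * ((Complex.normSq (v x) : ℝ) : ℂ)) := by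
      refine (hΦ.continuous.mul ?_).integrable_of_hasCompactSupport hcΦ.mul_right
      exact Complex.continuous_ofReal.comp (Complex.continuous_normSq.comp hv_cd.continuous)
    have him := (integral_im (𝕜 := ℂ) (μ := volume) hint).symm
    simp only [RCLike.im_to_complex] at him
    rw [him]
    refine integral_eq_zero_of_ae (Filter.Eventually.of_forall fun x => ?_)
    show (Φ x * ((Complex.normSq (v x) : ℝ) : ℂ)).im = 0
    simp [Complex.mul_im, hreal x]
  -- bounds for the first and second pieces
  have hA : ∀ i : Fin d, |(∫ x, (pdC i (pdC i Φ) x * c x) * v x).im|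
      ≤ M * (L2norm f * L2lapNorm f) := by
    intro i
    have hb : ∀ x, ‖(pdC i (pdC i Φ) x * c x) * v x‖ ≤ M * (‖f x‖ * ‖v x‖) := by
      intro x
      rw [norm_mul, norm_mul, hc]
      simp only [norm_conj']
      rw [mul_assoc]
      exact mul_le_mul_of_nonneg_right (hM2 i x)
        (mul_nonneg (norm_nonneg _) (norm_nonneg _))
    have h1 : |(∫ x, (pdC i (pdC i Φ) x * c x) * v x).im| ≤ ∫ x, M * (‖f x‖ * ‖v x‖) := by
      refine im_integral_bound ?_ ?_ ?_ ?_ hb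
      · exact ((contDiff_pdC i (contDiff_pdC i hΦ)).continuous.mul hc_cd.continuous).mul
          hv_cd.continuous
      · exact (hcs_pdC i (hcs_pdC i hcΦ)).mul_right.mul_right
      · exact continuous_const.mul (hf.continuous.norm.mul hv_cd.continuous.norm)
      · exact HasCompactSupport.mul_left hcf.norm.mul_right
    rw [integral_const_mul] at h1
    refine h1.trans (mul_le_mul_of_nonneg_left ?_ hM0)
    exact cauchy_schwarz hf.continuous hv_cd.continuous hcf hv_cs
  have hB : ∀ i : Fin d, |(∫ x, (pdC i Φ x * pdC i c x) * v x).im|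
      ≤ M * (L2gradNorm f * L2lapNorm f) := by
    intro i
    have hb : ∀ x, ‖(pdC i Φ x * pdC i c x) * v x‖ ≤ M * (‖pdC i f x‖ * ‖v x‖) := by
      intro x
      rw [norm_mul, norm_mul]
      have : ‖pdC i c x‖ = ‖pdC i f x‖ := by
        rw [hc, pdC_conj i hf]; exact norm_conj' _
      rw [this, mul_assoc]
      exact mul_le_mul_of_nonneg_right (hM1 i x)
        (mul_nonneg (norm_nonneg _) (norm_nonneg _))
    have h1 : |(∫ x, (pdC i Φ x * pdC i c x) * v x).im|
        ≤ ∫ x, M * (‖pdC i f x‖ * ‖v x‖) := by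
      refine im_integral_bound ?_ ?_ ?_ ?_ hb
      · exact ((contDiff_pdC i hΦ).continuous.mul (contDiff_pdC i hc_cd).continuous).mul
          hv_cd.continuous
      · exact (hcs_pdC i hcΦ).mul_right.mul_right
      · exact continuous_const.mul ((contDiff_pdC i hf).continuous.norm.mul
          hv_cd.continuous.norm)
      · exact HasCompactSupport.mul_left (hcs_pdC i hcf).norm.mul_right
    rw [integral_const_mul] at h1
    refine h1.trans (mul_le_mul_of_nonneg_left ?_ hM0)
    refine le_trans (cauchy_schwarz (contDiff_pdC i hf).continuous hv_cd.continuous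
      (hcs_pdC i hcf) hv_cs) ?_
    exact mul_le_mul_of_nonneg_right (sqrt_normSq_pdC_le i hf hcf) (Real.sqrt_nonneg _)
  -- decompose each ibp'd integral
  have hdecomp : ∀ i : Fin d, ∫ x, pdC i (pdC i g) x * v x
      = (∫ x, (pdC i (pdC i Φ) x * c x) * v x)
        + (2:ℂ) * (∫ x, (pdC i Φ x * pdC i c x) * v x)
        + ∫ x, (Φ x * pdC i (pdC i c) x) * v x := by
    intro i
    have h1 : (fun x => pdC i (pdC i g) x * v x)
        = fun x => (pdC i (pdC i Φ) x * c x) * v x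
            + (2:ℂ) * ((pdC i Φ x * pdC i c x) * v x)
            + (Φ x * pdC i (pdC i c) x) * v x := by
      funext x; rw [hexp i x]; ring
    rw [h1, integral_add, integral_add, integral_const_mul]
    · exact hcc _ _ _ (contDiff_pdC i (contDiff_pdC i hΦ)) hc_cd hv_cd (hcs_pdC i (hcs_pdC i hcΦ))
    · refine Integrable.const_mul ?_ _
      exact hcc _ _ _ (contDiff_pdC i hΦ) (contDiff_pdC i hc_cd) hv_cd (hcs_pdC i hcΦ)
    · refine Integrable.add ?_ ?_
      · exact hcc _ _ _ (contDiff_pdC i (contDiff_pdC i hΦ)) hc_cd hv_cd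
          (hcs_pdC i (hcs_pdC i hcΦ))
      · refine Integrable.const_mul ?_ _
        exact hcc _ _ _ (contDiff_pdC i hΦ) (contDiff_pdC i hc_cd) hv_cd (hcs_pdC i hcΦ)
    · exact hcc _ _ _ hΦ (contDiff_pdC i (contDiff_pdC i hc_cd)) hv_cd hcΦ
  -- put everything together
  have hLHS : (∫ x, Φ x * (c x * lapC v x)).im
      = ∑ i : Fin d, ((∫ x, (pdC i (pdC i Φ) x * c x) * v x).im
          + 2 * (∫ x, (pdC i Φ x * pdC i c x) * v x).im) := by
    rw [hsplit, Complex.im_sum]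
    have : ∀ i : Fin d, (∫ x, g x * pdC i (pdC i v) x).im
        = ((∫ x, (pdC i (pdC i Φ) x * c x) * v x).im
            + 2 * (∫ x, (pdC i Φ x * pdC i c x) * v x).im)
          + (∫ x, (Φ x * pdC i (pdC i c) x) * v x).im := by
      intro i
      rw [hibp i, hdecomp i]
      simp [Complex.add_im, Complex.mul_im]
    rw [Finset.sum_congr rfl fun i _ => this i, Finset.sum_add_distrib]
    have h0 : ∑ i : Fin d, (∫ x, (Φ x * pdC i (pdC i c) x) * v x).im = 0 := by
      rw [← Complex.im_sum]; exact hthird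
    rw [h0, add_zero]
  rw [hLHS]
  refine le_trans (Finset.abs_sum_le_sum_abs _ _) ?_
  have hterm : ∀ i : Fin d,
      |(∫ x, (pdC i (pdC i Φ) x * c x) * v x).im
        + 2 * (∫ x, (pdC i Φ x * pdC i c x) * v x).im|
      ≤ M * (L2norm f * L2lapNorm f) + 2 * (M * (L2gradNorm f * L2lapNorm f)) := by
    intro i
    refine le_trans (abs_add_le _ _) ?_
    refine add_le_add (hA i) ?_
    rw [abs_mul, _root_.abs_two]
    exact mul_le_mul_of_nonneg_left (hB i) (by norm_num)
  refine le_trans (Finset.sum_le_sum fun i _ => hterm i) ?_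
  rw [Finset.sum_const, Finset.card_univ, Fintype.card_fin, nsmul_eq_mul]
  ring_nf
  exact le_refl _

lemma hasDerivAt_mass {t₁ t₂ : ℝ} {u : ℝ → E → ℂ} {K : Set E}
    (hK : IsCompact K) (hsupp : ∀ t, Function.support (u t) ⊆ K)
    (hu : ContDiffOn ℝ (⊤ : ℕ∞) (fun p : ℝ × E => u p.1 p.2) (Set.Ioo t₁ t₂ ×ˢ Set.univ))
    {φ : E → ℝ} (hφ : Continuous φ) (hφc : HasCompactSupport φ)
    {t : ℝ} (ht : t ∈ Set.Ioo t₁ t₂) :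
    HasDerivAt (fun s => ∫ x, φ x * Complex.normSq (u s x))
      (∫ x, φ x * (2 * ((starRingEnd ℂ) (u t x) * deriv (fun s => u s x) t).re)) t := by
  classical
  set U : ℝ × E → ℂ := fun p => u p.1 p.2 with hU
  set S : Set (ℝ × E) := Set.Ioo t₁ t₂ ×ˢ Set.univ with hSdef
  have hS : IsOpen S := isOpen_Ioo.prod isOpen_univ
  set v : ℝ × E → ℂ := fun p => fderiv ℝ U p (1, 0) with hv
  have hmemS : ∀ {s : ℝ} {x : E}, s ∈ Set.Ioo t₁ t₂ → ((s, x) : ℝ × E) ∈ S := by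
    intro s x hs
    exact Set.mem_prod.2 ⟨hs, Set.mem_univ _⟩
  have hUdiff : ∀ p ∈ S, DifferentiableAt ℝ U p := by
    intro p hp
    exact (hu.contDiffAt (hS.mem_nhds hp)).differentiableAt (by simp)
  have hderiv : ∀ p ∈ S, HasDerivAt (fun s => u s p.2) (v p) p.1 := by
    intro p hp
    have hcurve : HasDerivAt (fun s : ℝ => ((s, p.2) : ℝ × E)) ((1 : ℝ), (0 : E)) p.1 :=
      (hasDerivAt_id p.1).prodMk (hasDerivAt_const p.1 p.2)
    exact (hUdiff p hp).hasFDerivAt.comp_hasDerivAt p.1 hcurve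
  have hvcont : ContinuousOn v S :=
    (hu.continuousOn_fderiv_of_isOpen hS (by exact_mod_cast le_top)).clm_apply
      continuousOn_const
  obtain ⟨ε, hε, hball⟩ : ∃ ε > 0, Metric.closedBall t ε ⊆ Set.Ioo t₁ t₂ :=
    Metric.nhds_basis_closedBall.mem_iff.mp (isOpen_Ioo.mem_nhds ht)
  set Q : Set (ℝ × E) := Metric.closedBall t ε ×ˢ tsupport φ with hQdef
  have hQ : IsCompact Q := (isCompact_closedBall _ _).prod hφc
  have hQS : Q ⊆ S := by
    rintro ⟨s, x⟩ hq
    exact hmemS (hball hq.1)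
  set g : ℝ × E → ℝ := fun p => φ p.2 * (2 * ((starRingEnd ℂ) (U p) * v p).re) with hgdef
  have hgcont : ContinuousOn g S := by
    have h1 : ContinuousOn U S := hu.continuousOn
    have h2 : ContinuousOn (fun p => ((starRingEnd ℂ) (U p) * v p).re) S :=
      Complex.continuous_re.comp_continuousOn
        ((continuous_star.comp_continuousOn h1).mul hvcont)
    exact ((hφ.comp continuous_snd).continuousOn).mul (continuousOn_const.mul h2)
  obtain ⟨M, hM⟩ := hQ.exists_bound_of_continuousOn (hgcont.mono hQS)
  set M' : ℝ := max M 0 with hM'def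
  set bound : E → ℝ := (tsupport φ).indicator (fun _ => M') with hbdef
  have hbound_int : Integrable bound := by
    rw [hbdef, integrable_indicator_iff (isClosed_tsupport φ).measurableSet]
    exact integrableOn_const hφc.measure_lt_top.ne
  have key := hasDerivAt_integral_of_dominated_loc_of_deriv_le (μ := volume)
    (F := fun s x => φ x * Complex.normSq (u s x))
    (F' := fun s x => g (s, x)) (x₀ := t) (bound := bound) (Metric.ball_mem_nhds t hε)
    ?_ ?_ ?_ ?_ hbound_int ?_
  · have hcongr : (∫ x, g (t, x))
        = ∫ x, φ x * (2 * ((starRingEnd ℂ) (u t x) * deriv (fun s => u s x) t).re) := by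
      refine integral_congr_ae (Filter.Eventually.of_forall fun x => ?_)
      show g (t, x) = φ x * (2 * ((starRingEnd ℂ) (u t x) * deriv (fun s => u s x) t).re)
      have hd := hderiv (t, x) (hmemS ht)
      have hdd : deriv (fun s => u s x) t = v (t, x) := hd.deriv
      rw [hdd]
    rw [← hcongr]
    exact key.2
  · refine Filter.eventually_of_mem (isOpen_Ioo.mem_nhds ht) fun s hs => ?_
    have hus : Continuous (u s) := by
      refine hu.continuousOn.comp_continuous (continuous_const.prodMk continuous_id)
        fun x => ?_
      exact hmemS hs
    exact (hφ.mul (Complex.continuous_normSq.comp hus)).aestronglyMeasurable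
  · have hut : Continuous (u t) := by
      refine hu.continuousOn.comp_continuous (continuous_const.prodMk continuous_id)
        fun x => ?_
      exact hmemS ht
    exact (hφ.mul (Complex.continuous_normSq.comp hut)).integrable_of_hasCompactSupport
      hφc.mul_right
  · have hgt : Continuous fun x => g (t, x) := by
      refine hgcont.comp_continuous (continuous_const.prodMk continuous_id) fun x => ?_
      exact hmemS ht
    exact hgt.aestronglyMeasurable
  · refine Filter.Eventually.of_forall fun x => fun s hs => ?_
    by_cases hx : x ∈ tsupport φ
    · have hq : ((s, x) : ℝ × E) ∈ Q :=
        Set.mem_prod.2 ⟨Metric.ball_subset_closedBall hs, hx⟩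
      have : ‖g (s, x)‖ ≤ M := hM _ hq
      have hbx : bound x = M' := by rw [hbdef, Set.indicator_of_mem hx]
      rw [hbx]
      exact this.trans (le_max_left _ _)
    · have hφx : φ x = 0 := image_eq_zero_of_notMem_tsupport hx
      have hbx : bound x = 0 := by rw [hbdef, Set.indicator_of_notMem hx]
      rw [hbx, hgdef]
      simp [hφx]
  · refine Filter.Eventually.of_forall fun x => fun s hs => ?_
    have hsx : ((s, x) : ℝ × E) ∈ S := hmemS (hball (Metric.ball_subset_closedBall hs))
    have hw := hderiv (s, x) hsx
    have h1 := (hasDerivAt_normSq_comp hw).const_mul (φ x)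
    convert h1 using 1

end LocMass

/-- **Lipschitz-in-time bound for the localized mass** (displayed in the proof of
Theorem 1.1 of the paper). For any smooth compactly supported cut-off `φ` on `ℝ^d`
there is `C > 0` depending only on `φ` such that: for any smooth solution `u` of
`i∂_t u + Δ²u - σ₁Δu + W·u = 0` on an open interval `I = (t₁,t₂)` (with `W`
real-valued and `u(t,·)` supported in a fixed compact set `K`), for every `t ∈ I`,
`|d/dt ∫ φ·|u(t)|²| ≤ C·(|σ₁|·‖u‖_{L²}‖∇u‖_{L²} + ‖u‖_{L²}‖Δu‖_{L²} + ‖∇u‖_{L²}‖Δu‖_{L²})`. -/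
theorem localized_mass_lipschitz (d : ℕ) (hd : 1 ≤ d)
    (φ : EuclideanSpace ℝ (Fin d) → ℝ)
    (hφ : ContDiff ℝ (⊤ : ℕ∞) φ) (hφc : HasCompactSupport φ) :
    ∃ C > 0, ∀ (σ₁ : ℝ) (t₁ t₂ : ℝ)
      (u : ℝ → EuclideanSpace ℝ (Fin d) → ℂ)
      (W : ℝ → EuclideanSpace ℝ (Fin d) → ℝ)
      (K : Set (EuclideanSpace ℝ (Fin d))),
      IsCompact K →
      (∀ t, Function.support (u t) ⊆ K) →
      ContDiffOn ℝ (⊤ : ℕ∞)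
        (fun p : ℝ × EuclideanSpace ℝ (Fin d) => u p.1 p.2)
        (Set.Ioo t₁ t₂ ×ˢ Set.univ) →
      (∀ t ∈ Set.Ioo t₁ t₂, ∀ x,
        Complex.I * deriv (fun s => u s x) t + lapC (lapC (u t)) x
          - (σ₁ : ℂ) * lapC (u t) x + (W t x : ℂ) * u t x = 0) →
      ∀ t ∈ Set.Ioo t₁ t₂,
        |deriv (fun s => ∫ x, φ x * Complex.normSq (u s x)) t|
          ≤ C * (|σ₁| * L2norm (u t) * L2gradNorm (u t)
              + L2norm (u t) * L2lapNorm (u t)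
              + L2gradNorm (u t) * L2lapNorm (u t)) := by
  classical
  have hd0 : 0 < d := hd
  set Φ : EuclideanSpace ℝ (Fin d) → ℂ := fun x => ((φ x : ℝ) : ℂ) with hΦdef
  have hΦ : ContDiff ℝ (⊤ : ℕ∞) Φ := Complex.ofRealCLM.contDiff.comp hφ
  have hcΦ : HasCompactSupport Φ :=
    hφc.comp_left (g := fun r : ℝ => ((r : ℝ) : ℂ)) (by simp)
  have hreal : ∀ x, (Φ x).im = 0 := fun x => by simp [hΦdef]
  set H : EuclideanSpace ℝ (Fin d) → ℝ :=
    fun x => ∑ i : Fin d, (‖pdC i Φ x‖ + ‖pdC i (pdC i Φ) x‖) with hHdef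
  have hHcont : Continuous H := continuous_finset_sum _ fun i _ =>
    ((LocMass.contDiff_pdC i hΦ).continuous.norm).add
      ((LocMass.contDiff_pdC i (LocMass.contDiff_pdC i hΦ)).continuous.norm)
  have hHcs : HasCompactSupport H := by
    refine LocMass.hcs_finsum _ _ fun i => ?_
    exact ((LocMass.hcs_pdC i hcΦ).norm).add ((LocMass.hcs_pdC i (LocMass.hcs_pdC i hcΦ)).norm)
  obtain ⟨M, hM⟩ := hHcont.bounded_above_of_compact_support hHcs
  have hterm_le : ∀ (i : Fin d) x, ‖pdC i Φ x‖ + ‖pdC i (pdC i Φ) x‖ ≤ M := by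
    intro i x
    refine le_trans ?_ (le_trans (le_abs_self (H x)) (hM x))
    exact Finset.single_le_sum
      (f := fun i => ‖pdC i Φ x‖ + ‖pdC i (pdC i Φ) x‖)
      (fun i _ => add_nonneg (norm_nonneg _) (norm_nonneg _)) (Finset.mem_univ i)
  have hM1 : ∀ (i : Fin d) x, ‖pdC i Φ x‖ ≤ M := fun i x =>
    le_trans (le_add_of_nonneg_right (norm_nonneg _)) (hterm_le i x)
  have hM2 : ∀ (i : Fin d) x, ‖pdC i (pdC i Φ) x‖ ≤ M := fun i x =>
    le_trans (le_add_of_nonneg_left (norm_nonneg _)) (hterm_le i x)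
  have hM0 : 0 ≤ M := le_trans (norm_nonneg _) (hM1 ⟨0, hd0⟩ 0)
  refine ⟨4 * d * (M + 1), by positivity, ?_⟩
  intro σ₁ t₁ t₂ u W K hK hsupp hu hpde t ht
  have hf : ContDiff ℝ (⊤ : ℕ∞) (u t) := by
    have h1 : ContDiff ℝ (⊤ : ℕ∞)
        (fun x : EuclideanSpace ℝ (Fin d) => ((t, x) : ℝ × _)) :=
      contDiff_const.prodMk contDiff_id
    have h2 := hu.comp
      (h1.contDiffOn (s := (Set.univ : Set (EuclideanSpace ℝ (Fin d)))))
      (fun x _ => Set.mem_prod.2 ⟨ht, Set.mem_univ x⟩)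
    exact contDiffOn_univ.mp (h2.congr fun x _ => rfl)
  have hcf : HasCompactSupport (u t) := by
    refine HasCompactSupport.intro hK fun x hx => ?_
    by_contra h
    exact hx (hsupp t (Function.mem_support.2 h))
  have hL_cd : ContDiff ℝ (⊤ : ℕ∞) (lapC (u t)) := LocMass.contDiff_lapC hf
  have hL_cs : HasCompactSupport (lapC (u t)) := LocMass.hcs_lapC hf hcf
  have hLL_cd : ContDiff ℝ (⊤ : ℕ∞) (lapC (lapC (u t))) := LocMass.contDiff_lapC hL_cd
  have hLL_cs : HasCompactSupport (lapC (lapC (u t))) := LocMass.hcs_lapC hL_cd hL_cs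
  -- derivative of the localized mass
  have hD := LocMass.hasDerivAt_mass hK hsupp hu hφ.continuous hφc ht
  rw [hD.deriv]
  -- pointwise rewriting using the equation
  have hpt : ∀ x, φ x * (2 * ((starRingEnd ℂ) (u t x) * deriv (fun s => u s x) t).re)
      = 2 * σ₁ * (φ x * ((starRingEnd ℂ) (u t x) * lapC (u t) x).im)
        - 2 * (φ x * ((starRingEnd ℂ) (u t x) * lapC (lapC (u t)) x).im) := by
    intro x
    have h := hpde t ht x
    have h3 : deriv (fun s => u s x) t
        = Complex.I * (lapC (lapC (u t)) x - (σ₁ : ℂ) * lapC (u t) x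
            + ((W t x : ℝ) : ℂ) * u t x) := by
      linear_combination (-Complex.I) * h + (deriv (fun s => u s x) t) * Complex.I_mul_I
    rw [h3]
    simp only [Complex.mul_re, Complex.mul_im, Complex.add_re, Complex.add_im,
      Complex.sub_re, Complex.sub_im, Complex.I_re, Complex.I_im,
      Complex.ofReal_re, Complex.ofReal_im, Complex.conj_re, Complex.conj_im]
    ring
  have hint1 : Integrable (fun x => φ x * ((starRingEnd ℂ) (u t x) * lapC (u t) x).im) := by
    refine (hφ.continuous.mul (Complex.continuous_im.comp
      ((continuous_star.comp hf.continuous).mul hL_cd.continuous)))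
      |>.integrable_of_hasCompactSupport hφc.mul_right
  have hint2 : Integrable
      (fun x => φ x * ((starRingEnd ℂ) (u t x) * lapC (lapC (u t)) x).im) := by
    refine (hφ.continuous.mul (Complex.continuous_im.comp
      ((continuous_star.comp hf.continuous).mul hLL_cd.continuous)))
      |>.integrable_of_hasCompactSupport hφc.mul_right
  have hsplit : (∫ x, φ x * (2 * ((starRingEnd ℂ) (u t x) * deriv (fun s => u s x) t).re))
      = 2 * σ₁ * (∫ x, φ x * ((starRingEnd ℂ) (u t x) * lapC (u t) x).im)
        - 2 * (∫ x, φ x * ((starRingEnd ℂ) (u t x) * lapC (lapC (u t)) x).im) := by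
    rw [show (fun x => φ x * (2 * ((starRingEnd ℂ) (u t x) * deriv (fun s => u s x) t).re))
        = fun x => 2 * σ₁ * (φ x * ((starRingEnd ℂ) (u t x) * lapC (u t) x).im)
          - 2 * (φ x * ((starRingEnd ℂ) (u t x) * lapC (lapC (u t)) x).im)
      from funext hpt]
    rw [integral_sub (hint1.const_mul _) (hint2.const_mul _),
      integral_const_mul, integral_const_mul]
  rw [hsplit]
  -- relate the real integrals of imaginary parts to imaginary parts of complex integrals
  have hci1 : Integrable (fun x => Φ x * ((starRingEnd ℂ) (u t x) * lapC (u t) x)) := by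
    refine (hΦ.continuous.mul ((continuous_star.comp hf.continuous).mul hL_cd.continuous))
      |>.integrable_of_hasCompactSupport hcΦ.mul_right
  have hci2 : Integrable (fun x => Φ x * ((starRingEnd ℂ) (u t x) * lapC (lapC (u t)) x)) := by
    refine (hΦ.continuous.mul ((continuous_star.comp hf.continuous).mul hLL_cd.continuous))
      |>.integrable_of_hasCompactSupport hcΦ.mul_right
  have heq1 : (∫ x, φ x * ((starRingEnd ℂ) (u t x) * lapC (u t) x).im)
      = (∫ x, Φ x * ((starRingEnd ℂ) (u t x) * lapC (u t) x)).im := by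
    have him := (integral_im (𝕜 := ℂ) (μ := volume) hci1)
    simp only [RCLike.im_to_complex] at him
    rw [← him]
    refine integral_congr_ae (Filter.Eventually.of_forall fun x => ?_)
    show φ x * ((starRingEnd ℂ) (u t x) * lapC (u t) x).im
      = (Φ x * ((starRingEnd ℂ) (u t x) * lapC (u t) x)).im
    simp [hΦdef, Complex.mul_im]
  have heq2 : (∫ x, φ x * ((starRingEnd ℂ) (u t x) * lapC (lapC (u t)) x).im)
      = (∫ x, Φ x * ((starRingEnd ℂ) (u t x) * lapC (lapC (u t)) x)).im := by
    have him := (integral_im (𝕜 := ℂ) (μ := volume) hci2)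
    simp only [RCLike.im_to_complex] at him
    rw [← him]
    refine integral_congr_ae (Filter.Eventually.of_forall fun x => ?_)
    show φ x * ((starRingEnd ℂ) (u t x) * lapC (lapC (u t)) x).im
      = (Φ x * ((starRingEnd ℂ) (u t x) * lapC (lapC (u t)) x)).im
    simp [hΦdef, Complex.mul_im]
  rw [heq1, heq2]
  -- the two integral estimates
  have hJ1 := LocMass.est1 hd0 hΦ hcΦ hreal hf hcf hM1
  have hJ2 := LocMass.est2 hd0 hΦ hcΦ hreal hf hcf hM1 hM2
  set A := (∫ x, Φ x * ((starRingEnd ℂ) (u t x) * lapC (u t) x)).im with hA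
  set B := (∫ x, Φ x * ((starRingEnd ℂ) (u t x) * lapC (lapC (u t)) x)).im with hB
  have habs : |2 * σ₁ * A - 2 * B| ≤ 2 * |σ₁| * |A| + 2 * |B| := by
    refine le_trans (abs_sub _ _) ?_
    rw [abs_mul, abs_mul, abs_mul, _root_.abs_two]
  have hN : 0 ≤ L2norm (u t) := Real.sqrt_nonneg _
  have hG : 0 ≤ L2gradNorm (u t) := Real.sqrt_nonneg _
  have hΛ : 0 ≤ L2lapNorm (u t) := Real.sqrt_nonneg _
  have hσ : 0 ≤ |σ₁| := abs_nonneg _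
  have hdr : (1 : ℝ) ≤ (d : ℝ) := by exact_mod_cast hd
  refine le_trans habs ?_
  have hb1 : 2 * |σ₁| * |A| ≤ 2 * |σ₁| * ((d : ℝ) * M * (L2norm (u t) * L2gradNorm (u t))) :=
    mul_le_mul_of_nonneg_left hJ1 (by positivity)
  have hb2 : 2 * |B| ≤ 2 * ((d : ℝ) * M * (L2norm (u t) * L2lapNorm (u t))
      + 2 * ((d : ℝ) * M * (L2gradNorm (u t) * L2lapNorm (u t)))) :=
    mul_le_mul_of_nonneg_left hJ2 (by norm_num)
  refine le_trans (add_le_add hb1 hb2) ?_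
  have hp1 : 0 ≤ |σ₁| * (L2norm (u t) * L2gradNorm (u t)) := by positivity
  have hp2 : 0 ≤ L2norm (u t) * L2lapNorm (u t) := by positivity
  have hp3 : 0 ≤ L2gradNorm (u t) * L2lapNorm (u t) := by positivity
  have hdM : 0 ≤ (d : ℝ) * M := by positivity
  nlinarith [mul_le_mul_of_nonneg_right hdr hp1, mul_le_mul_of_nonneg_right hdr hp2,
    mul_le_mul_of_nonneg_right hdr hp3,
    mul_nonneg hdM hp1, mul_nonneg hdM hp2, mul_nonneg hdM hp3,
    mul_nonneg (mul_nonneg hσ hN) hG, mul_nonneg hN hΛ, mul_nonneg hG hΛ]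

end
end
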